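/- arXiv:2001.06348 — 17 statements merged into one kernel-verified Lean document; each statement's English description precedes it below -/
import Mathlib

section
/- Let T be a monoidal (commutative) monad on Set, L a signature, V a type of variables, and t₁, t₂ L-terms over V such that every variable of V occurs in t₁ or in t₂ and the equation t₁ = t₂ is one-drop. If T preserves the equation t₁ = t₂, then T is affine. -/
open FirstOrder FirstOrder.Language

universe u v w

/-- canonical n-ary sequencing ψⁿ obtained from ψ -/
def seqFin {T : Type u → Type u} [Monad T] {A : Type u} :
    {n : ℕ} → (Fin n → T A) → T (Fin n → A)
  | 0, _ => pure (fun i => i.elim0)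
  | _ + 1, xs => (fun a f => Fin.cons a f) <$> xs 0 <*> seqFin (fun i => xs i.succ)

open Classical in
noncomputable def occCount {L : Language} {V : Type*} (v : V) : L.Term V → ℕ
  | .var w => if w = v then 1 else 0
  | .func _ ts => ∑ i, occCount v (ts i)

/-- the lifted structure on `T A` -/
def liftedStructure (T : Type u → Type u) [Monad T] {L : Language} {A : Type u}
    [L.Structure A] : L.Structure (T A) where
  funMap f xs := Structure.funMap f <$> seqFin xs
  RelMap _ _ := False

/-- T preserves the equation t₁ = t₂ -/
def Preserves (T : Type u → Type u) [Monad T] {L : Language} {V : Type*}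
    (t₁ t₂ : L.Term V) : Prop :=
  ∀ (A : Type u) (_ : L.Structure A),
    (∀ val : V → A, t₁.realize val = t₂.realize val) →
    ∀ val : V → T A,
      @Term.realize L (T A) (liftedStructure T) V val t₁ =
      @Term.realize L (T A) (liftedStructure T) V val t₂


def trivS (L : Language) : L.Structure PUnit.{u+1} where
  funMap _ _ := PUnit.unit
  RelMap _ _ := False

lemma map_punit_eq {T : Type u → Type u} [Monad T] [LawfulMonad T]
    (f : PUnit.{u+1} → PUnit.{u+1}) (y : T PUnit.{u+1}) : f <$> y = y := by
  have : f = id := funext fun a => Subsingleton.elim _ _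
  rw [this, id_map]

lemma seqFin_pure_unit {T : Type u → Type u} [Monad T] [LawfulMonad T] :
    ∀ {n : ℕ} (xs : Fin n → T PUnit.{u+1}), (∀ i, xs i = pure PUnit.unit) →
      (fun _ => PUnit.unit) <$> seqFin xs = pure PUnit.unit
  | 0, xs, _ => by simp [seqFin]
  | n+1, xs, h => by
      have ih := seqFin_pure_unit (fun i => xs i.succ) (fun i => h i.succ)
      simp only [seqFin, h 0, map_pure, pure_seq, Functor.map_map]
      exact ih

lemma seqFin_one {T : Type u → Type u} [Monad T] [LawfulMonad T] :
    ∀ {n : ℕ} (xs : Fin n → T PUnit.{u+1}) (i₀ : Fin n),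
      (∀ i, i ≠ i₀ → xs i = pure PUnit.unit) →
      (fun _ => PUnit.unit) <$> seqFin xs = xs i₀
  | n+1, xs, i₀, h => by
      induction i₀ using Fin.cases with
      | zero =>
          have htail : ∀ i : Fin n, xs i.succ = pure PUnit.unit :=
            fun i => h i.succ (Fin.succ_ne_zero i)
          have hs := seqFin_pure_unit (T := T) (fun i => xs i.succ) htail
          simp only [seqFin, map_eq_bind_pure_comp, seq_eq_bind_map, bind_assoc, pure_bind,
            Function.comp_def] at hs ⊢
          rw [hs]
          have hp : (fun (_ : PUnit.{u+1}) => (pure PUnit.unit : T PUnit.{u+1})) = pure :=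
            funext fun a => by cases a; rfl
          rw [hp, bind_pure]
      | succ j =>
          have h0 : xs 0 = pure PUnit.unit := h 0 (Fin.succ_ne_zero j).symm
          have ih := seqFin_one (fun i => xs i.succ) j (fun i hi => h i.succ (by
            simpa [Fin.succ_inj] using hi))
          simp only [seqFin, h0, map_pure, pure_seq, Functor.map_map]
          exact ih

lemma realize_zero {T : Type u → Type u} [Monad T] [LawfulMonad T]
    {L : Language} {V : Type w} (v : V)
    (val : V → T PUnit.{u+1}) (hval : ∀ w, w ≠ v → val w = pure PUnit.unit) :
    ∀ (t : L.Term V), occCount v t = 0 →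
      @Term.realize L _ (@liftedStructure T _ L _ (trivS L)) V val t = pure PUnit.unit
  | .var w, h => by
      simp only [occCount] at h
      split at h
      · simp at h
      · next hne => simp [Term.realize, hval w hne]
  | .func f ts, h => by
      simp only [occCount, Finset.sum_eq_zero_iff, Finset.mem_univ, forall_true_left] at h
      have hxs : ∀ i, @Term.realize L _ (@liftedStructure T _ L _ (trivS L)) V val (ts i)
          = pure PUnit.unit := fun i => realize_zero v val hval (ts i) (h i)
      show (@Structure.funMap L PUnit.{u+1} (trivS L) _ f) <$> seqFin
          (fun i => @Term.realize L _ (@liftedStructure T _ L _ (trivS L)) V val (ts i))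
        = pure PUnit.unit
      have hf : (@Structure.funMap L PUnit.{u+1} (trivS L) _ f) = fun _ => PUnit.unit :=
        funext fun _ => Subsingleton.elim _ _
      rw [hf]
      exact seqFin_pure_unit _ hxs

lemma realize_one {T : Type u → Type u} [Monad T] [LawfulMonad T]
    {L : Language} {V : Type w} (v : V)
    (val : V → T PUnit.{u+1}) (hval : ∀ w, w ≠ v → val w = pure PUnit.unit) :
    ∀ (t : L.Term V), occCount v t = 1 →
      @Term.realize L _ (@liftedStructure T _ L _ (trivS L)) V val t = val v
  | .var w, h => by
      simp only [occCount] at h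
      split at h
      · next he => simp [Term.realize, he]
      · simp at h
  | .func f ts, h => by
      simp only [occCount] at h
      obtain ⟨i₀, hi₀⟩ : ∃ i, occCount v (ts i) ≠ 0 := by
        by_contra hc
        push_neg at hc
        simp [hc] at h
      have hkey : occCount v (ts i₀) + ∑ x ∈ Finset.univ.erase i₀, occCount v (ts x) = 1 := by
        simpa using (Finset.add_sum_erase Finset.univ (fun i => occCount v (ts i))
          (Finset.mem_univ i₀)).trans h
      have h1 : occCount v (ts i₀) = 1 := by omega
      have h0 : ∑ x ∈ Finset.univ.erase i₀, occCount v (ts x) = 0 := by omega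
      rw [Finset.sum_eq_zero_iff] at h0
      have hxs : ∀ i, i ≠ i₀ →
          @Term.realize L _ (@liftedStructure T _ L _ (trivS L)) V val (ts i)
          = pure PUnit.unit := fun i hi =>
        realize_zero v val hval (ts i) (h0 i (Finset.mem_erase.mpr ⟨hi, Finset.mem_univ i⟩))
      show (@Structure.funMap L PUnit.{u+1} (trivS L) _ f) <$> seqFin
          (fun i => @Term.realize L _ (@liftedStructure T _ L _ (trivS L)) V val (ts i))
        = val v
      have hf : (@Structure.funMap L PUnit.{u+1} (trivS L) _ f) = fun _ => PUnit.unit :=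
        funext fun _ => Subsingleton.elim _ _
      rw [hf, seqFin_one _ i₀ hxs]
      exact realize_one v val hval (ts i₀) h1

/-- If a monoidal monad preserves a one-drop equation (whose variables
exhaust `V`), then it is affine. -/
theorem preserves_one_drop_implies_affine
    (T : Type u → Type u) [Monad T] [LawfulMonad T] [CommApplicative T]
    (L : Language) [∀ n, IsEmpty (L.Relations n)] (V : Type w)
    (t₁ t₂ : L.Term V)
    (hvars : ∀ v : V, occCount v t₁ ≠ 0 ∨ occCount v t₂ ≠ 0)
    (hdrop : ∃ v : V, (occCount v t₁ = 1 ∧ occCount v t₂ = 0) ∨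
                      (occCount v t₂ = 1 ∧ occCount v t₁ = 0))
    (hpres : Preserves T t₁ t₂) :
    Subsingleton (T PUnit.{u+1}) := by
  classical
  obtain ⟨v, hv⟩ := hdrop
  suffices H : ∀ z : T PUnit.{u+1}, z = pure PUnit.unit by
    exact ⟨fun x y => (H x).trans (H y).symm⟩
  intro z
  set val : V → T PUnit.{u+1} := fun w => if w = v then z else pure PUnit.unit with hvaldef
  have hval : ∀ w, w ≠ v → val w = pure PUnit.unit := fun w h => if_neg h
  have hvv : val v = z := if_pos rfl
  have key := hpres PUnit.{u+1} (trivS L) (fun valA => Subsingleton.elim _ _) val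
  rcases hv with ⟨h1, h2⟩ | ⟨h1, h2⟩
  · rw [realize_one v val hval t₁ h1, realize_zero v val hval t₂ h2, hvv] at key
    exact key
  · rw [realize_one v val hval t₂ h1, realize_zero v val hval t₁ h2, hvv] at key
    exact key.symm
end

section
/- Let T be a monoidal (commutative) monad on Set, L a signature, V a type of variables, and t₁ = t₂ a one-drop equation of L-terms over V. If the equation t₁ = t₂ holds in the lifted L-structure on T PUnit (the lifting of the unique L-structure on the one-element set), i.e. t₁ and t₂ have equal realizations in T PUnit under every valuation V → T PUnit, then T is affine. -/
open FirstOrder FirstOrder.Language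

universe u v w

/-- the unique (relation-free) structure on the one-element set -/
def punitStructure (L : Language) : L.Structure PUnit.{u+1} where
  funMap _ _ := PUnit.unit
  RelMap _ _ := False

/-! Evaluate both sides at the valuation sending the dropped variable `v` to an arbitrary
`x : T PUnit` and every other variable to `pure ()`. Realization in the lifted structure is
linear in a variable occurring once: a term not containing `v` evaluates to a `pure` value, and a
term containing `v` exactly once evaluates to `(fun b => ⋯) <$> x`, which over `PUnit` is `x`
itself. The equation therefore forces `x = pure ()`. -/

theorem Finset.exists_eq_one_of_sum_eq_one {ι : Type*} {s : Finset ι} {f : ι → ℕ}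
    (h : ∑ i ∈ s, f i = 1) : ∃ j ∈ s, f j = 1 ∧ ∀ i ∈ s, i ≠ j → f i = 0 := by
  classical
  obtain ⟨j, hj, hj0⟩ := Finset.exists_ne_zero_of_sum_ne_zero (h ▸ one_ne_zero)
  have hsplit := Finset.add_sum_erase s f hj
  rw [h] at hsplit
  have hrest : ∑ i ∈ s.erase j, f i = 0 := by omega
  refine ⟨j, hj, by omega, fun i hi hij => ?_⟩
  exact Finset.sum_eq_zero_iff.mp hrest i (Finset.mem_erase.mpr ⟨hij, hi⟩)

section Sequencing

variable {T : Type u → Type u} [Monad T] [LawfulMonad T] {A : Type u}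

theorem seqFin_pure : ∀ {n : ℕ} (a : Fin n → A), seqFin (fun i => (pure (a i) : T A)) = pure a
  | 0, a => congrArg pure (funext fun i => i.elim0)
  | n + 1, a => by
    rw [seqFin, seqFin_pure (fun i => a i.succ), map_pure, seq_pure, map_pure]
    exact congrArg pure (Fin.cons_self_tail a)

theorem seqFin_eq_map_update : ∀ {n : ℕ} (xs : Fin n → T A) (a : Fin n → A) (j : Fin n),
    (∀ i, i ≠ j → xs i = pure (a i)) → seqFin xs = Function.update a j <$> xs j
  | n + 1, xs, a, j, h => by
    induction j using Fin.cases with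
    | zero =>
      have htail : seqFin (fun i => xs i.succ) = pure (Fin.tail a) := by
        rw [← seqFin_pure]; exact congrArg seqFin (funext fun i => h i.succ (Fin.succ_ne_zero i))
      rw [seqFin, htail, seq_pure, Functor.map_map]
      congr 1
      funext b
      conv_rhs => rw [← Fin.cons_self_tail a, Fin.update_cons_zero]
    | succ j =>
      rw [seqFin, h 0 (Fin.succ_ne_zero j).symm, map_pure, pure_seq,
        seqFin_eq_map_update _ (Fin.tail a) j (fun i hi => h i.succ (Fin.succ_injective _ |>.ne hi)),
        Functor.map_map]
      congr 1
      funext b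
      rw [Fin.cons_update, Fin.cons_self_tail]

end Sequencing

theorem liftedStructure_funMap {T : Type u → Type u} [Monad T] {L : Language} {A : Type u}
    [L.Structure A] {n : ℕ} (f : L.Functions n) (xs : Fin n → T A) :
    (liftedStructure T).funMap f xs = Structure.funMap f <$> seqFin xs :=
  rfl

namespace FirstOrder.Language.Term

variable {L : Language} {V : Type*}

theorem realize_update_of_occCount_eq_zero [DecidableEq V] {M : Type*} [L.Structure M]
    (val : V → M) (v : V) (m : M) : ∀ {t : L.Term V}, occCount v t = 0 →
      t.realize (Function.update val v m) = t.realize val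
  | var w, h => by
    have hw : w ≠ v := by simpa [occCount] using h
    simp [realize, Function.update_of_ne hw]
  | func f ts, h => by
    have hts : ∀ i, occCount v (ts i) = 0 := by simpa [occCount] using h
    simp only [realize, realize_update_of_occCount_eq_zero val v m (hts _)]

variable {T : Type u → Type u} [Monad T] [LawfulMonad T] {A : Type u} [L.Structure A]

attribute [local instance] liftedStructure

theorem realize_liftedStructure_pure (a : V → A) :
    ∀ t : L.Term V, t.realize (fun w => (pure (a w) : T A)) = pure (t.realize a)
  | var w => rfl
  | func f ts => by
    simp only [realize, realize_liftedStructure_pure a, liftedStructure_funMap, seqFin_pure,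
      map_pure]

variable [DecidableEq V]

theorem realize_liftedStructure_update_of_occCount_eq_zero (a : V → A) (v : V) (x : T A)
    {t : L.Term V} (h : occCount v t = 0) :
    t.realize (Function.update (fun w => pure (a w)) v x) = pure (t.realize a) := by
  rw [realize_update_of_occCount_eq_zero _ v x h, realize_liftedStructure_pure]

theorem realize_liftedStructure_update_of_occCount_eq_one (a : V → A) (v : V) (x : T A) :
    ∀ {t : L.Term V}, occCount v t = 1 →
      t.realize (Function.update (fun w => pure (a w)) v x) =
        (fun b => t.realize (Function.update a v b)) <$> x
  | var w, h => by
    have hw : w = v := by simpa [occCount] using h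
    subst hw
    simp [realize]
  | func f ts, h => by
    obtain ⟨j, -, hj, hrest⟩ :=
      Finset.exists_eq_one_of_sum_eq_one (by simpa [occCount] using h)
    have hne : ∀ i, i ≠ j → occCount v (ts i) = 0 := fun i hi => hrest i (Finset.mem_univ i) hi
    simp only [realize, liftedStructure_funMap]
    rw [seqFin_eq_map_update _ (fun i => (ts i).realize a) j fun i hi =>
        realize_liftedStructure_update_of_occCount_eq_zero a v x (hne i hi),
      realize_liftedStructure_update_of_occCount_eq_one a v x hj, Functor.map_map,
      Functor.map_map]
    congr 1
    funext b
    congr 1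
    funext i
    rcases eq_or_ne i j with rfl | hi
    · rw [Function.update_self]
    · rw [Function.update_of_ne hi, realize_update_of_occCount_eq_zero _ v b (hne i hi)]

end FirstOrder.Language.Term

section PUnit

attribute [local instance] liftedStructure punitStructure

theorem eq_pure_unit_of_realize_eq {T : Type u → Type u} [Monad T] [LawfulMonad T]
    {L : Language} {V : Type*} [DecidableEq V] {t₁ t₂ : L.Term V} {v : V}
    (h₁ : occCount v t₁ = 1) (h₂ : occCount v t₂ = 0)
    (hsat : ∀ val : V → T PUnit.{u+1}, t₁.realize val = t₂.realize val) (x : T PUnit.{u+1}) :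
    x = pure PUnit.unit := by
  have h := hsat (Function.update (fun _ => pure PUnit.unit) v x)
  rwa [Term.realize_liftedStructure_update_of_occCount_eq_one (fun _ => PUnit.unit) v x h₁,
    Term.realize_liftedStructure_update_of_occCount_eq_zero (fun _ => PUnit.unit) v x h₂,
    Subsingleton.elim (fun _ => _) id, id_map] at h

end PUnit

theorem one_drop_on_TPUnit_implies_affine_general
    (T : Type u → Type u) [Monad T] [LawfulMonad T]
    (L : Language) (V : Type w)
    (t₁ t₂ : L.Term V)
    (hdrop : ∃ v : V, (occCount v t₁ = 1 ∧ occCount v t₂ = 0) ∨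
                      (occCount v t₂ = 1 ∧ occCount v t₁ = 0))
    (hsat : ∀ val : V → T PUnit.{u+1},
      @Term.realize L (T PUnit.{u+1})
        (@liftedStructure T _ L PUnit.{u+1} (punitStructure L)) V val t₁ =
      @Term.realize L (T PUnit.{u+1})
        (@liftedStructure T _ L PUnit.{u+1} (punitStructure L)) V val t₂) :
    Subsingleton (T PUnit.{u+1}) := by
  classical
  obtain ⟨v, ⟨h₁, h₂⟩ | ⟨h₂, h₁⟩⟩ := hdrop
  · exact subsingleton_of_forall_eq _ (eq_pure_unit_of_realize_eq h₁ h₂ hsat)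
  · exact subsingleton_of_forall_eq _ (eq_pure_unit_of_realize_eq h₂ h₁ fun val => (hsat val).symm)

/-- If a one-drop equation holds in the lifted structure on `T PUnit`,
then `T` is affine. -/
theorem one_drop_on_TPUnit_implies_affine
    (T : Type u → Type u) [Monad T] [LawfulMonad T] [CommApplicative T]
    (L : Language) [∀ n, IsEmpty (L.Relations n)] (V : Type w)
    (t₁ t₂ : L.Term V)
    (hdrop : ∃ v : V, (occCount v t₁ = 1 ∧ occCount v t₂ = 0) ∨
                      (occCount v t₂ = 1 ∧ occCount v t₁ = 0))
    (hsat : ∀ val : V → T PUnit.{u+1},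
      @Term.realize L (T PUnit.{u+1})
        (@liftedStructure T _ L PUnit.{u+1} (punitStructure L)) V val t₁ =
      @Term.realize L (T PUnit.{u+1})
        (@liftedStructure T _ L PUnit.{u+1} (punitStructure L)) V val t₂) :
    Subsingleton (T PUnit.{u+1}) :=
  one_drop_on_TPUnit_implies_affine_general T L V t₁ t₂ hdrop hsat
end

section
/- Let T be a monoidal (commutative) monad on Set. If T preserves the idempotence equation x·x = x — that is, for every type A and every binary operation m : A → A → A with m a a = a for all a, the lifted operation satisfies m <$> x <*> x = x for all x : T A — then T is relevant. -/
universe u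

/-- `T` is relevant: ψ ∘ Δ = TΔ. -/
def Relevant (T : Type u → Type u) [Monad T] : Prop :=
  ∀ (A : Type u) (x : T A),
    @Prod.mk A A <$> x <*> x = (fun a => (a, a) : A → A × A) <$> x

/-- If a monoidal monad preserves the idempotence equation `x·x = x`,
then it is relevant. -/
theorem preserves_idempotence_implies_relevant
    (T : Type u → Type u) [Monad T] [LawfulMonad T] [CommApplicative T]
    (hpres : ∀ (A : Type u) (m : A → A → A), (∀ a : A, m a a = a) →
      ∀ x : T A, m <$> x <*> x = x) :
    Relevant T := by
  intro A x
  have h := hpres (A × A) (fun p q => (p.1, q.2)) (fun a => rfl)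
    ((fun a => (a, a)) <$> x)
  rw [← h]
  simp only [map_eq_pure_bind, seq_eq_bind, bind_assoc, pure_bind]
end

section
/- Let T be a monoidal (commutative) monad on Set, V a type of variables, and t : FreeMagma V a magma term in which every variable occurs at most once, containing a variable x. If T preserves the magma equation t = t[x·x/x] (where t[x·x/x] is obtained from t by substituting the term x·x for the variable x), then T is relevant. -/
universe u v

-- number of occurrences of a variable in a magma term
open Classical in
noncomputable def occsM {V : Type v} (v : V) : FreeMagma V → ℕ
  | .of w => if w = v then 1 else 0
  | .mul a b => occsM v a + occsM v b

-- substitution of a magma term for a variable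
open Classical in
noncomputable def substM {V : Type v} (v : V) (s : FreeMagma V) : FreeMagma V → FreeMagma V
  | .of w => if w = v then s else .of w
  | .mul a b => .mul (substM v s a) (substM v s b)

/-- evaluation of a magma term under a binary operation and a valuation -/
def evalM {V : Type v} {A : Type u} (m : A → A → A) (val : V → A) : FreeMagma V → A
  | .of w => val w
  | .mul a b => m (evalM m val a) (evalM m val b)

/-- If `m` is idempotent, substituting `x·x` for `x` does not change evaluation. -/
lemma evalM_substM_dup {V : Type v} {A : Type u} (m : A → A → A) (hm : ∀ a, m a a = a)
    (x : V) (val : V → A) : ∀ s : FreeMagma V,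
    evalM m val (substM x (.mul (.of x) (.of x)) s) = evalM m val s := by
  intro s
  induction s with
  | ih1 w =>
      simp only [substM]
      split
      · next h => simp [evalM, hm, h]
      · rfl
  | ih2 a b iha ihb =>
      simp only [substM, evalM]
      rw [iha, ihb]

/-- If `x` does not occur in `s` and all other variables are valued by `pure`,
evaluation with the lifted operation is `pure` of the evaluation. -/
lemma evalM_pure {T : Type u → Type u} [Monad T] [LawfulMonad T] {V : Type v} {B : Type u}
    (m : B → B → B) (x : V) (c : V → B) (val : V → T B)
    (hval : ∀ v, v ≠ x → val v = pure (c v)) :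
    ∀ s : FreeMagma V, occsM x s = 0 →
      evalM (fun a b => m <$> a <*> b) val s = pure (evalM m c s) := by
  intro s
  induction s with
  | ih1 w =>
      intro h0
      have hw : w ≠ x := by
        intro h; subst h; simp [occsM] at h0
      simp [evalM, hval w hw]
  | ih2 a b iha ihb =>
      intro h0
      simp only [occsM, Nat.add_eq_zero] at h0
      simp [evalM, iha h0.1, ihb h0.2, map_pure, seq_pure]

/-- If `x` occurs exactly once in `s` and all other variables are valued by `pure`,
evaluation with the lifted operation is a split-mono map applied to `val x`. -/
lemma evalM_linear {T : Type u → Type u} [Monad T] [LawfulMonad T] {V : Type v} {B : Type u}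
    (m : B → B → B) (x : V) (c : V → B)
    (hinvL : ∀ b : B, ∃ g : B → B, ∀ a, g (m a b) = a)
    (hinvR : ∀ a : B, ∃ g : B → B, ∀ b, g (m a b) = b) :
    ∀ s : FreeMagma V, occsM x s = 1 →
      ∃ h h' : B → B, (∀ b, h' (h b) = b) ∧
        ∀ val : V → T B, (∀ v, v ≠ x → val v = pure (c v)) →
          evalM (fun a b => m <$> a <*> b) val s = h <$> val x := by
  intro s
  induction s with
  | ih1 w =>
      intro h1
      have hw : w = x := by
        by_contra h
        simp [occsM, h] at h1
      subst hw
      exact ⟨id, id, fun b => rfl, fun val _ => by simp [evalM]⟩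
  | ih2 a b iha ihb =>
      intro h1
      simp only [occsM] at h1
      rcases Nat.add_eq_one_iff.mp h1 with ⟨ha, hb⟩ | ⟨ha, hb⟩
      · -- x occurs in b
        obtain ⟨h, h', hinv, heval⟩ := ihb hb
        set ca := evalM m c a with hca
        obtain ⟨g, hg⟩ := hinvR ca
        refine ⟨(fun q => m ca q) ∘ h, h' ∘ g, fun b0 => by simp [hg, hinv], ?_⟩
        intro val hval
        have h2 := evalM_pure m x c val hval a ha
        simp [evalM, h2, heval val hval, map_pure, pure_seq, Functor.map_map]
        rfl
      · -- x occurs in a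
        obtain ⟨h, h', hinv, heval⟩ := iha ha
        set cb := evalM m c b with hcb
        obtain ⟨g, hg⟩ := hinvL cb
        refine ⟨(fun p => m p cb) ∘ h, h' ∘ g, fun b0 => by simp [hg, hinv], ?_⟩
        intro val hval
        have h2 := evalM_pure m x c val hval b hb
        simp [evalM, h2, heval val hval, seq_pure, Functor.map_map]
        rfl

open Classical in
/-- Substitution lemma for evaluation. -/
lemma evalM_substM {V : Type v} {A : Type u} (m : A → A → A) (val : V → A)
    (x : V) (s₀ : FreeMagma V) : ∀ s : FreeMagma V,
    evalM m val (substM x s₀ s)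
      = evalM m (fun v => if v = x then evalM m val s₀ else val v) s := by
  intro s
  induction s with
  | ih1 w =>
      simp only [substM, evalM]
      split
      · next h => simp [evalM, h]
      · next h => simp [evalM, h]
  | ih2 a b iha ihb =>
      simp only [substM, evalM]
      rw [iha, ihb]

/-- if every variable occurs at most once in `t`, `x` occurs in `t`, and
`T` preserves the equation `t = t[x·x/x]`, then `T` is relevant. -/
theorem preserves_dup_magma_implies_relevant
    (T : Type u → Type u) [Monad T] [LawfulMonad T] [CommApplicative T]
    (V : Type v) (t : FreeMagma V) (x : V)
    (hlin : ∀ v : V, occsM v t ≤ 1) (hx : occsM x t = 1)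
    (hpres : ∀ (A : Type u) (m : A → A → A),
      (∀ val : V → A,
        evalM m val t = evalM m val (substM x (.mul (.of x) (.of x)) t)) →
      ∀ val : V → T A,
        evalM (fun a b => m <$> a <*> b) val t =
        evalM (fun a b => m <$> a <*> b) val (substM x (.mul (.of x) (.of x)) t)) :
    Relevant T := by
  classical
  intro A u
  by_cases hA : Nonempty A
  case neg =>
    -- A is empty
    have hE : IsEmpty A := not_nonempty_iff.mp hA
    have h1 : (@Prod.mk A A) = (fun _ b => (b, b)) := funext fun a => hE.elim a
    rw [h1]
    have h2 : ((fun _ b => (b, b)) : A → A → A × A)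
        = Function.const A (fun b => ((b, b) : A × A)) := rfl
    rw [h2]
    have h3 : (Function.const A (fun b => ((b, b) : A × A))) <$> u <*> u
        = (fun b => ((b, b) : A × A)) <$> (u *> u) := by
      rw [seqRight_eq, map_seq, Functor.map_map]
      rfl
    rw [h3]
    have h4 : u *> u = u := by
      have : u *> u = u >>= fun _ => u := by
        rw [seqRight_eq, seq_eq_bind_map]
        simp [Functor.map_map, bind_map_left]
      rw [this]
      have : (fun (_ : A) => u) = (fun a => pure a) := funext fun a => hE.elim a
      rw [this, bind_pure]
    rw [h4]
    rfl
  case pos =>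
    -- main case: carrier B = (A × A) → ℚ with midpoint-style operation
    set B : Type u := (A × A) → ℚ with hB
    set m : B → B → B := fun f g q => f q / 3 + 2 * g q / 3 with hm
    have hidem : ∀ f : B, m f f = f := by
      intro f; funext q; simp only [hm]; ring
    -- premise of hpres
    have hprem : ∀ val : V → B,
        evalM m val t = evalM m val (substM x (.mul (.of x) (.of x)) t) := by
      intro val
      exact (evalM_substM_dup m hidem x val t).symm
    have hlift := hpres B m hprem
    -- encoding of elements of A into B
    set E : A → B := fun a q => if q = (a, a) then 1 else 0 with hEdef
    set c : V → B := fun _ _ => 0 with hcdef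
    set val : V → T B := fun v => if v = x then (E <$> u) else pure (c v) with hvaldef
    have hval : ∀ v, v ≠ x → val v = pure (c v) := by
      intro v hv; simp [hvaldef, hv]
    have hvalx : val x = E <$> u := by simp [hvaldef]
    -- invertibility of translations
    have hinvL : ∀ b : B, ∃ g : B → B, ∀ a, g (m a b) = a := by
      intro b
      refine ⟨fun f q => 3 * f q - 2 * b q, fun a => ?_⟩
      funext q; simp only [hm]; ring
    have hinvR : ∀ a : B, ∃ g : B → B, ∀ b, g (m a b) = b := by
      intro a
      refine ⟨fun f q => (3 * f q - a q) / 2, fun b => ?_⟩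
      funext q; simp only [hm]; ring
    obtain ⟨h, h', hinv, heval⟩ :=
      evalM_linear (T := T) m x c hinvL hinvR t hx
    -- evaluate both sides of the lifted equation
    have hL : evalM (fun a b => m <$> a <*> b) val t = h <$> val x := heval val hval
    have hR : evalM (fun a b => m <$> a <*> b) val (substM x (.mul (.of x) (.of x)) t)
        = h <$> (m <$> val x <*> val x) := by
      rw [evalM_substM]
      have hval' : ∀ v, v ≠ x →
          (fun v => if v = x then
              evalM (fun a b => m <$> a <*> b) val (FreeMagma.mul (.of x) (.of x))
            else val v) v = pure (c v) := by
        intro v hv; simp [hv, hval v hv]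
      have := heval _ hval'
      rw [this]
      simp [evalM]
    have hkey : val x = m <$> val x <*> val x := by
      have heq : h <$> val x = h <$> (m <$> val x <*> val x) := by
        rw [← hL, ← hR]; exact hlift val
      have := congrArg (fun z => h' <$> z) heq
      simpa [Functor.map_map, hinv] using this
    rw [hvalx] at hkey
    -- unfold the right-hand side
    have hfuse : m <$> (E <$> u) <*> (E <$> u)
        = (fun a b => m (E a) (E b)) <$> u <*> u := by
      rw [Functor.map_map, seq_map_assoc, Functor.map_map]
      rfl
    rw [hfuse] at hkey
    -- the injection A × A → B
    set F : A × A → B := fun p => m (E p.1) (E p.2) with hFdef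
    have hFinj : Function.Injective F := by
      rintro ⟨a, b⟩ ⟨c', d⟩ hF
      have key : ∀ (a b z : A), F (a, b) (z, z) =
          (if z = a then (1:ℚ)/3 else 0) + (if z = b then 2/3 else 0) := by
        intro a b z
        have e1 : ((z, z) = (a, a)) = (z = a) := by simp
        have e2 : ((z, z) = (b, b)) = (z = b) := by simp
        simp only [hFdef, hm, hEdef, e1, e2]
        split_ifs <;> norm_num
      have hac : a = c' := by
        by_contra hac
        have h1 := congrFun hF (a, a)
        rw [key, key, if_pos (show a = a from rfl), if_neg hac] at h1
        split_ifs at h1 <;> norm_num at h1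
      have hbd : b = d := by
        by_contra hbd
        have h2 := congrFun hF (b, b)
        rw [key, key, if_pos (show b = b from rfl), if_neg hbd] at h2
        split_ifs at h2 <;> norm_num at h2
      simp [hac, hbd]
    -- retraction
    have hPA : Nonempty (A × A) := by
      obtain ⟨a⟩ := hA; exact ⟨(a, a)⟩
    have hret : ∀ p : A × A, Function.invFun F (F p) = p :=
      fun p => Function.leftInverse_invFun hFinj p
    set r : B → A × A := Function.invFun F with hrdef
    -- apply r to the key equation and conclude
    have hl : (fun a => r (E a)) = (fun a : A => (a, a)) := by
      funext a
      have hEF : E a = F (a, a) := by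
        simp only [hFdef]
        exact (hidem (E a)).symm
      rw [hEF]; exact hret (a, a)
    have h5 : r <$> (E <$> u) = (fun a : A => (a, a)) <$> u := by
      rw [Functor.map_map]
      exact congrArg (· <$> u) hl
    have h6 : r <$> ((fun a b => m (E a) (E b)) <$> u <*> u)
        = @Prod.mk A A <$> u <*> u := by
      rw [map_seq, Functor.map_map]
      have hfun : (fun (a : A) => r ∘ (fun b => m (E a) (E b))) = @Prod.mk A A := by
        funext a b
        exact hret (a, b)
      rw [hfun]
    rw [← h6, ← hkey, h5]
end

section
/- Let T be a monoidal (commutative) monad on Set, L a signature without constants (every function symbol has arity at least 1) containing a binary symbol ·, and t an L-term in which every variable occurs at most once, containing a variable x. If T preserves the equation t = t[x·x/x] (where t[x·x/x] is obtained from t by substituting the term x·x for the variable x), then T is relevant. -/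
open FirstOrder FirstOrder.Language

universe u v w

namespace RelevantAux

variable {A : Type u}

/-- binary "pass-through / combine" operation on `Option (A × A)` -/
def mOp : Option (A × A) → Option (A × A) → Option (A × A)
  | none, q => q
  | some p, none => some p
  | some (a, _), some (_, d) => some (a, d)

lemma mOp_none_left (q : Option (A × A)) : mOp none q = q := rfl

lemma mOp_none_right : ∀ p : Option (A × A), mOp p none = p
  | none => rfl
  | some _ => rfl

lemma mOp_self : ∀ p : Option (A × A), mOp p p = p
  | none => rfl
  | some (_, _) => rfl

lemma mOp_some_some (a b c d : A) :
    mOp (some (a, b)) (some (c, d)) = some (a, d) := rfl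

/-- fold of `mOp` over a tuple -/
def collapse : {n : ℕ} → (Fin n → Option (A × A)) → Option (A × A)
  | 0, _ => none
  | _ + 1, v => mOp (v 0) (collapse fun i => v i.succ)

lemma collapse_none : ∀ {n : ℕ} (v : Fin n → Option (A × A)),
    (∀ i, v i = none) → collapse v = none
  | 0, _, _ => rfl
  | n + 1, v, h => by
      rw [collapse, h 0, collapse_none _ (fun i => h i.succ)]
      rfl

lemma collapse_single : ∀ {n : ℕ} (j : Fin n) (v : Fin n → Option (A × A)),
    (∀ i, i ≠ j → v i = none) → collapse v = v j
  | n + 1, j, v, h => by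
      rcases Fin.eq_zero_or_eq_succ j with rfl | ⟨j', rfl⟩
      · rw [collapse, collapse_none _ (fun i => h i.succ (Fin.succ_ne_zero i)),
          mOp_none_right]
      · rw [collapse, h 0 (Fin.succ_ne_zero j').symm,
          collapse_single j' _ (fun i hi => h i.succ (fun hc => hi (Fin.succ_injective _ hc)))]
        rfl

lemma collapse_two (p q : Option (A × A)) : collapse ![p, q] = mOp p q := by
  show mOp p (mOp q none) = mOp p q
  rw [mOp_none_right]

variable {T : Type u → Type u} [Monad T] [LawfulMonad T]

lemma seqFin_pure : ∀ {n : ℕ} (v : Fin n → A),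
    seqFin (T := T) (fun i => pure (v i)) = pure v
  | 0, v => congrArg pure (funext fun i => i.elim0)
  | n + 1, v => by
      rw [seqFin, seqFin_pure (fun i => v i.succ)]
      simp only [map_pure, pure_seq, map_pure]
      exact congrArg pure (Fin.cons_self_tail v)

lemma seqFin_single : ∀ {n : ℕ} (j : Fin n) (xs : Fin n → T (Option (A × A))),
    (∀ i, i ≠ j → xs i = pure none) →
    ∃ g : Option (A × A) → Fin n → Option (A × A),
      (∀ b, g b j = b) ∧ (∀ b i, i ≠ j → g b i = none) ∧
      seqFin xs = g <$> xs j
  | n + 1, j, xs, h => by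
      rcases Fin.eq_zero_or_eq_succ j with rfl | ⟨j', rfl⟩
      · refine ⟨fun b => Fin.cons b (fun _ => none), fun b => rfl, ?_, ?_⟩
        · intro b i hi
          rcases Fin.eq_zero_or_eq_succ i with rfl | ⟨i', rfl⟩
          · exact absurd rfl hi
          · simp [Fin.cons_succ]
        · have htail : seqFin (T := T) (fun i : Fin n => xs i.succ) =
              pure (fun _ => none) := by
            have : (fun i : Fin n => xs i.succ) =
                (fun i : Fin n => pure ((fun _ : Fin n => (none : Option (A × A))) i)) := by
              funext i
              exact h i.succ (Fin.succ_ne_zero i)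
            rw [this, seqFin_pure]
          rw [seqFin, htail, seq_pure, Functor.map_map]
      · obtain ⟨g', hg1, hg0, hg⟩ :=
          seqFin_single j' (fun i : Fin n => xs i.succ)
            (fun i hi => h i.succ (fun hc => hi (Fin.succ_injective _ hc)))
        refine ⟨fun b => Fin.cons none (g' b), fun b => hg1 b, ?_, ?_⟩
        · intro b i hi
          rcases Fin.eq_zero_or_eq_succ i with rfl | ⟨i', rfl⟩
          · rfl
          · exact hg0 b i' (fun hc => hi (congrArg Fin.succ hc))
        · rw [seqFin, h 0 (Fin.succ_ne_zero j').symm, map_pure, pure_seq, hg,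
            Functor.map_map]

variable (L : Language)

/-- structure on `Option (A × A)` interpreting every function symbol as `collapse` -/
def optStructure : L.Structure (Option (A × A)) where
  funMap _ v := collapse v
  RelMap _ _ := False

open Classical in
lemma realize_main {V : Type w} (x : V) (X₀ : T (Option (A × A))) :
    ∀ (s : L.Term V), occCount x s ≤ 1 →
    @Term.realize L (T (Option (A × A)))
      (@liftedStructure T _ L (Option (A × A)) (optStructure L)) V
      (fun v => if v = x then X₀ else pure none) s
    = if occCount x s = 0 then pure none else X₀ := by
  intro s
  induction s with
  | var w =>
      intro _
      by_cases hw : w = x <;> simp [Term.realize, occCount, hw]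
  | func f ts ih =>
      intro hle
      have hocc : occCount x (Term.func f ts) = ∑ i, occCount x (ts i) := by
        simp [occCount]
      rw [hocc] at hle ⊢
      have hreal : @Term.realize L (T (Option (A × A)))
          (@liftedStructure T _ L (Option (A × A)) (optStructure L)) V
          (fun v => if v = x then X₀ else pure none) (Term.func f ts)
          = collapse <$> seqFin (fun i =>
              @Term.realize L (T (Option (A × A)))
                (@liftedStructure T _ L (Option (A × A)) (optStructure L)) V
                (fun v => if v = x then X₀ else pure none) (ts i)) := rfl
      rw [hreal]
      rcases Nat.le_one_iff_eq_zero_or_eq_one.mp hle with h0 | h1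
      · have hz : ∀ i, occCount x (ts i) = 0 := by
          intro i
          have := (Finset.sum_eq_zero_iff.mp h0) i (Finset.mem_univ i)
          exact this
        have : (fun i => @Term.realize L (T (Option (A × A)))
            (@liftedStructure T _ L (Option (A × A)) (optStructure L)) V
            (fun v => if v = x then X₀ else pure none) (ts i)) =
            (fun i => pure ((fun _ => (none : Option (A × A))) i)) := by
          funext i
          rw [ih i (by rw [hz i]; exact Nat.zero_le 1), hz i, if_pos rfl]
        rw [this, seqFin_pure, map_pure, collapse_none _ (fun _ => rfl), h0, if_pos rfl]
      · obtain ⟨j, hj1, hj0⟩ : ∃ j, occCount x (ts j) = 1 ∧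
            ∀ i, i ≠ j → occCount x (ts i) = 0 := by
          obtain ⟨j, hj⟩ : ∃ j, occCount x (ts j) ≠ 0 := by
            by_contra hc
            push_neg at hc
            rw [Finset.sum_eq_zero (fun i _ => hc i)] at h1
            exact one_ne_zero h1.symm
          have hjle : occCount x (ts j) ≤ 1 := by
            rw [← h1]
            exact Finset.single_le_sum (f := fun i => occCount x (ts i))
              (fun i _ => Nat.zero_le _) (Finset.mem_univ j)
          have hj1 : occCount x (ts j) = 1 :=
            le_antisymm hjle (Nat.one_le_iff_ne_zero.mpr hj)
          refine ⟨j, hj1, fun i hi => ?_⟩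
          have hrest : ∑ i ∈ Finset.univ.erase j, occCount x (ts i) = 0 := by
            rw [← Finset.add_sum_erase Finset.univ (fun i => occCount x (ts i))
              (Finset.mem_univ j), hj1] at h1
            omega
          exact (Finset.sum_eq_zero_iff.mp hrest) i
            (Finset.mem_erase.mpr ⟨hi, Finset.mem_univ i⟩)
        obtain ⟨g, hg1, hg0, hg⟩ := seqFin_single j
          (fun i => @Term.realize L (T (Option (A × A)))
            (@liftedStructure T _ L (Option (A × A)) (optStructure L)) V
            (fun v => if v = x then X₀ else pure none) (ts i))
          (by
            intro i hi
            beta_reduce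
            rw [ih i (by rw [hj0 i hi]; exact Nat.zero_le 1), hj0 i hi, if_pos rfl])
        rw [hg, ih j (le_of_eq hj1), hj1, if_neg one_ne_zero, Functor.map_map]
        have hcg : (fun b => collapse (g b)) = (id : Option (A × A) → Option (A × A)) := by
          funext b
          have := collapse_single j (g b) (fun i hi => hg0 b i hi)
          simp [this, hg1 b]
        rw [hcg, id_map, h1, if_neg one_ne_zero]

end RelevantAux

open RelevantAux in
lemma cancel_some {T : Type u → Type u} [Monad T] [LawfulMonad T] {C : Type u}
    (u v : T C) (h : Option.some <$> u = Option.some <$> v) : u = v := by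
  have key : ∀ w : T C, (Option.some <$> w) >>= (fun o => o.elim u pure) = w := by
    intro w
    rw [bind_map_left]
    simp
  rw [← key u, ← key v, h]

-- STATEMENT 4: for a constant-free signature with a binary symbol `mul` and a term `t`
-- in which every variable occurs at most once and `x` occurs, preservation of
-- `t = t[x·x/x]` implies relevance.
open Classical in
theorem preserves_dup_term_implies_relevant
    (T : Type u → Type u) [Monad T] [LawfulMonad T] [CommApplicative T]
    (L : Language) [∀ n, IsEmpty (L.Relations n)] [IsEmpty (L.Functions 0)]
    (mul : L.Functions 2) (V : Type w) (t : L.Term V) (x : V)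
    (hlin : ∀ v : V, occCount v t ≤ 1) (hx : occCount x t = 1)
    (hpres : Preserves T t
      (t.subst (fun v => if v = x
        then Term.func mul ![Term.var x, Term.var x] else Term.var v))) :
    Relevant T := by
  intro A x0
  set σ : V → L.Term V := fun v => if v = x
      then Term.func mul ![Term.var x, Term.var x] else Term.var v with hσ
  letI S : L.Structure (Option (A × A)) := RelevantAux.optStructure L
  letI S2 : L.Structure (T (Option (A × A))) := liftedStructure T
  -- the plain equation holds in the optStructure
  have hplain : ∀ val : V → Option (A × A),
      t.realize val = (t.subst σ).realize val := by
    intro val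
    rw [Term.realize_subst]
    have hfun : (fun v => Term.realize val (σ v)) = val := by
      funext v
      rw [hσ]
      beta_reduce
      by_cases hv : v = x
      · rw [if_pos hv]
        show RelevantAux.collapse
          (fun i => Term.realize val (![(Term.var x : L.Term V), Term.var x] i)) = val v
        have he : (fun i => Term.realize val (![(Term.var x : L.Term V), Term.var x] i)) =
            ![val x, val x] := by
          funext i
          fin_cases i <;> rfl
        rw [he, RelevantAux.collapse_two, RelevantAux.mOp_self, hv]
      · rw [if_neg hv]
        rfl
    rw [hfun]
  set X : T (Option (A × A)) := (fun a => some (a, a)) <$> x0 with hX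
  have key := hpres (Option (A × A)) S hplain (fun v => if v = x then X else pure none)
  -- left side
  rw [RelevantAux.realize_main L x X t (hlin x), hx, if_neg one_ne_zero] at key
  -- right side
  rw [Term.realize_subst] at key
  set Y : T (Option (A × A)) :=
    RelevantAux.collapse <$> seqFin ![X, X] with hY
  have hval : (fun v => @Term.realize L (T (Option (A × A)))
        (@liftedStructure T _ L (Option (A × A)) S) V
        (fun v => if v = x then X else pure none) (σ v)) =
      (fun v => if v = x then Y else pure none) := by
    funext v
    by_cases hv : v = x
    · rw [hσ]
      simp only [if_pos hv]
      show RelevantAux.collapse <$> seqFin (fun i =>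
        @Term.realize L (T (Option (A × A)))
          (@liftedStructure T _ L (Option (A × A)) S) V
          (fun w => if w = x then X else pure none)
          (![Term.var x, Term.var x] i)) = Y
      have : (fun i => @Term.realize L (T (Option (A × A)))
          (@liftedStructure T _ L (Option (A × A)) S) V
          (fun w => if w = x then X else pure none)
          (![Term.var x, Term.var x] i)) = ![X, X] := by
        funext i
        fin_cases i <;> simp [Term.realize]
      rw [this, hY]
    · rw [hσ]
      beta_reduce
      rw [if_neg hv]
      show (if v = x then X else pure none) = if v = x then Y else pure none
      rw [if_neg hv, if_neg hv]
  rw [hval, RelevantAux.realize_main L x Y t (hlin x), hx, if_neg one_ne_zero] at key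
  -- key : X = Y; compute Y
  have hY2 : Y = (fun a b => (some (a, b) : Option (A × A))) <$> x0 <*> x0 := by
    rw [hY]
    have h1 : seqFin (T := T) ![X, X] =
        (fun a f => Fin.cons a f) <$> X <*> seqFin ![X] := by
      rw [seqFin]
      congr 1
    have h2 : seqFin (T := T) ![X] =
        (fun b => Fin.cons b (fun i : Fin 0 => i.elim0)) <$> X := by
      rw [seqFin, seqFin, seq_pure, Functor.map_map]
      rfl
    rw [h1, h2, hX]
    simp only [Functor.map_map, seq_map_assoc, map_seq]
    congr 1
  rw [hY2, hX] at key
  -- now transfer through `some`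
  apply cancel_some
  rw [map_seq, Functor.map_map, Functor.map_map]
  have hc : (fun a => Option.some ∘ Prod.mk a) =
      (fun a b => (some (a, b) : Option (A × A))) := rfl
  rw [hc]
  exact key.symm
end

section
/- Let T be a monoidal (commutative) monad on Set. If T preserves the magma equation z·(x·x) = (z·y)·x — that is, for every type A and binary operation m on A such that m z (m x x) = m (m z y) x for all x, y, z in A, the lifted operation on T A satisfies the same equation for all elements of T A — then T is relevant. (Note this is a one-drop equation: y occurs once on the right and not on the left.) -/
universe u

/-- Auxiliary magma carrier: a point `E`, a copy of `A`, and pairs. -/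
inductive BAux (A : Type u) : Type u
  | E : BAux A
  | L : A → BAux A
  | P : A → A → BAux A

namespace BAux

def m {A : Type u} : BAux A → BAux A → BAux A
  | _, .E => .E
  | _, .P a b => .P a b
  | .L a, .L b => .P a b
  | .E, .L a => .P a a
  | .P _ _, .L a => .P a a

theorem m_law {A : Type u} : ∀ x y z : BAux A, m z (m x x) = m (m z y) x := by
  intro x y z
  cases x <;> cases y <;> cases z <;> rfl

def g {A : Type u} (a₀ : A) : BAux A → A × A
  | .P a b => (a, b)
  | _ => (a₀, a₀)

@[simp] theorem g_P {A : Type u} (a₀ a b : A) : g a₀ (.P a b) = (a, b) := rfl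

end BAux

/-- If a monoidal monad preserves the one-drop equation
`z·(x·x) = (z·y)·x`, then it is relevant. -/
theorem preserves_zxx_eq_zyx_implies_relevant
    (T : Type u → Type u) [Monad T] [LawfulMonad T] [CommApplicative T]
    (hpres : ∀ (A : Type u) (m : A → A → A),
      (∀ x y z : A, m z (m x x) = m (m z y) x) →
      ∀ x y z : T A,
        m <$> z <*> (m <$> x <*> x) = m <$> (m <$> z <*> y) <*> x) :
    Relevant T := by
  intro A x
  by_cases hA : Nonempty A
  · obtain ⟨a₀⟩ := hA
    have key := hpres (BAux A) BAux.m BAux.m_law (BAux.L <$> x) (pure BAux.E)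
      (pure BAux.E)
    -- simplify both sides of key
    have key' : (fun a b => BAux.P a b : A → A → BAux A) <$> x <*> x
        = (fun a => BAux.P a a : A → BAux A) <$> x := by
      have h1 : (BAux.m <$> (pure BAux.E : T (BAux A)))
          <*> (BAux.m <$> (BAux.L <$> x) <*> (BAux.L <$> x))
          = (fun a b => BAux.P a b : A → A → BAux A) <$> x <*> x := by
        simp [map_pure, pure_seq, Functor.map_map, map_seq, seq_map_assoc,
          BAux.m, Function.comp_def]
      have h2 : BAux.m <$> (BAux.m <$> (pure BAux.E : T (BAux A)) <*> pure BAux.E)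
          <*> (BAux.L <$> x)
          = (fun a => BAux.P a a : A → BAux A) <$> x := by
        simp [map_pure, pure_seq, seq_pure, Functor.map_map, seq_map_assoc,
          BAux.m, Function.comp_def]
      rw [← h1, ← h2, key]
    -- project back to A × A
    have := congrArg (fun t => BAux.g a₀ <$> t) key'
    simpa [Functor.map_map, map_seq, Function.comp_def] using this
  · -- A is empty: both sides are binds over equal (vacuously) functions
    have hL : (@Prod.mk A A <$> x <*> x)
        = x >>= fun a => x >>= fun b => pure (a, b) := by
      simp only [seq_eq_bind_map, map_eq_pure_bind, bind_assoc, pure_bind]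
    have hR : ((fun a => (a, a) : A → A × A) <$> x)
        = x >>= fun a => pure (a, a) := map_eq_pure_bind _ _
    rw [hL, hR]
    exact congrArg (x >>= ·) (funext fun a => absurd ⟨a⟩ hA)
end

section
/- Let T be a monoidal (commutative) monad on Set. If T is relevant, then T is n-relevant for every n ≥ 2. -/
universe u

/-- `T` is n-relevant: ψⁿ ∘ Δⁿ = TΔⁿ. -/
def NRelevant (T : Type u → Type u) [Monad T] (n : ℕ) : Prop :=
  ∀ (A : Type u) (x : T A),
    (List.replicate n x).traverse id = List.replicate n <$> x

/-!
Relevance, pushed through an arbitrary binary function, absorbs one more copy of `x` into the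
diagonal: `List.cons <$> x <*> (List.replicate (n + 1) <$> x)` collapses to
`List.replicate (n + 2) <$> x`. Induction from the trivial case of one copy gives the rest.
-/

namespace Relevant

variable {T : Type u → Type u} [Monad T] [LawfulMonad T]

theorem map_seq_self (hrel : Relevant T) {A B : Type u} (f : A → A → B) (x : T A) :
    f <$> x <*> x = (fun a => f a a) <$> x := by
  have h := congrArg (fun p => (fun q : A × A => f q.1 q.2) <$> p) (hrel A x)
  simp only [map_seq, Functor.map_map] at h
  exact h

theorem nRelevant_succ (hrel : Relevant T) (n : ℕ) : NRelevant T (n + 1) := by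
  induction n with
  | zero => intro A x; simp [List.traverse]; rfl
  | succ n ih =>
    intro A x
    calc (List.replicate (n + 2) x).traverse id
        = List.cons <$> x <*> (List.replicate (n + 1) x).traverse id := by
          simp [List.replicate_succ, List.traverse]
      _ = (fun a b => a :: List.replicate (n + 1) b) <$> x <*> x := by
          rw [ih A x, seq_map_assoc, Functor.map_map]; rfl
      _ = List.replicate (n + 2) <$> x := hrel.map_seq_self _ x

end Relevant

theorem relevant_implies_nRelevant_general
    (T : Type u → Type u) [Monad T] [LawfulMonad T]
    (hrel : Relevant T) (n : ℕ) (hn : 2 ≤ n) :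
    NRelevant T n := by
  obtain ⟨m, rfl⟩ : ∃ m, n = m + 1 := ⟨n - 1, by omega⟩
  exact hrel.nRelevant_succ m

/-- relevance implies n-relevance for every n ≥ 2. -/
theorem relevant_implies_nRelevant
    (T : Type u → Type u) [Monad T] [LawfulMonad T] [CommApplicative T]
    (hrel : Relevant T) (n : ℕ) (hn : 2 ≤ n) :
    NRelevant T n :=
  relevant_implies_nRelevant_general T hrel n hn
end

section
/- Let M be a commutative monoid and let T be the writer monad T X = M × X, with pure x = (1, x) and bind (w, x) f = ((w * (f x).1), (f x).2). For every n ≥ 1, T is n-relevant if and only if wⁿ = w for every w ∈ M. (In particular, T is 2-relevant, equivalently relevant, iff M is idempotent.) -/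
universe u

/-- The writer monad `X ↦ M × X`. -/
def WriterM (M : Type u) (X : Type u) : Type u := M × X

instance (M : Type u) [CommMonoid M] : Monad (WriterM M) where
  pure x := ((1 : M), x)
  bind p f := (p.1 * (f p.2).1, (f p.2).2)

def wr {M A : Type u} (w : M) (a : A) : WriterM M A := (w, a)

lemma writer_map {M : Type u} [CommMonoid M] {A B : Type u} (f : A → B) (w : M) (a : A) :
    (f <$> wr w a : WriterM M B) = wr (w * 1) (f a) := by rfl

lemma writer_trav {M : Type u} [CommMonoid M] {A : Type u} (n : ℕ) (w : M) (a : A) :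
    (List.replicate n (wr w a : WriterM M A)).traverse id = wr (w ^ n) (List.replicate n a) := by
  induction n with
  | zero => rw [pow_zero]; rfl
  | succ k ih =>
    rw [List.replicate_succ]
    show ((List.cons <$> (wr w a : WriterM M A)) <*> List.traverse id (List.replicate k (wr w a))) = _
    rw [ih]
    show wr (w * 1 * (w ^ k * 1)) (a :: List.replicate k a) = _
    rw [mul_one, mul_one, ← pow_succ', List.replicate_succ]

/-- for `n ≥ 1`, the writer monad `X ↦ M × X` over a commutative monoid
`M` is n-relevant iff `wⁿ = w` for every `w ∈ M`. -/
theorem writer_nRelevant_iff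
    (M : Type u) [CommMonoid M] (n : ℕ) (hn : 1 ≤ n) :
    NRelevant (WriterM M) n ↔ ∀ w : M, w ^ n = w := by
  constructor
  · intro h w
    have := h PUnit (wr w PUnit.unit)
    rw [writer_trav, writer_map, mul_one] at this
    exact congrArg Prod.fst this
  · intro h A x
    obtain ⟨w, a⟩ := x
    show (List.replicate n (wr w a)).traverse id = List.replicate n <$> wr w a
    rw [writer_trav, writer_map, mul_one, h]
end

section
/- Let T be a monoidal (commutative) monad on Set and n ≥ 2. If T is n-relevant and affine, then T is relevant. -/
universe u

/-- Affine monads can discard a second argument. -/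
theorem discard_right {T : Type u → Type u} [Monad T] [LawfulMonad T]
    (haff : Subsingleton (T PUnit.{u+1})) {B C : Type u} (w : T B) (r : T C) :
    ((fun p (_ : C) => p) <$> w) <*> r = w := by
  have h : (fun _ : C => PUnit.unit) <$> r = pure PUnit.unit := Subsingleton.elim _ _
  calc ((fun p (_ : C) => p) <$> w) <*> r
      = ((fun p (_ : PUnit.{u+1}) => p) <$> w) <*> ((fun _ : C => PUnit.unit) <$> r) := by
        simp [seq_map_assoc, Functor.map_map, Function.comp_def]
    _ = ((fun p (_ : PUnit.{u+1}) => p) <$> w) <*> (pure PUnit.unit) := by rw [h]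
    _ = w := by simp [seq_pure, Functor.map_map]

/-- if `T` is n-relevant (n ≥ 2) and affine, then `T` is relevant. -/
theorem nRelevant_affine_implies_relevant
    (T : Type u → Type u) [Monad T] [LawfulMonad T] [CommApplicative T]
    (n : ℕ) (hn : 2 ≤ n)
    (hnrel : NRelevant T n) (haff : Subsingleton (T PUnit.{u+1})) :
    Relevant T := by
  intro A x
  obtain ⟨m, rfl⟩ : ∃ m, n = m + 2 := ⟨n - 2, by omega⟩
  by_cases hA : Nonempty A
  · obtain ⟨a₀⟩ := hA
    set g : List A → A × A := fun l => (l.headD a₀, l.tail.headD a₀) with hg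
    set rest := (List.replicate m x).traverse id with hrest
    have e1 : g <$> ((List.replicate (m + 2) x).traverse id) = Prod.mk <$> x <*> x := by
      calc g <$> ((List.replicate (m + 2) x).traverse id)
          = g <$> (List.cons <$> x <*> (List.cons <$> x <*> rest)) := by
            simp [List.replicate_succ, List.traverse, hrest]
        _ = ((fun p (_ : List A) => p) <$> (Prod.mk <$> x <*> x)) <*> rest := by
            simp [map_seq, seq_map_assoc, Functor.map_map, seq_assoc, Function.comp_def, hg]
        _ = Prod.mk <$> x <*> x := discard_right haff _ _
    have e2 : g <$> (List.replicate (m + 2) <$> x) = (fun a => (a, a) : A → A × A) <$> x := by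
      simp [Functor.map_map, Function.comp_def, hg, List.replicate_succ]
    rw [← e1, ← e2, hnrel A x]
  · have hempty : IsEmpty A := not_nonempty_iff.mp hA
    have hfun : (@Prod.mk A A) = (fun a (_ : A) => (a, a)) := by
      funext a
      exact hempty.elim a
    calc @Prod.mk A A <$> x <*> x
        = ((fun p (_ : A) => p) <$> ((fun a => (a, a) : A → A × A) <$> x)) <*> x := by
          rw [hfun, Functor.map_map]
      _ = (fun a => (a, a) : A → A × A) <$> x := discard_right haff _ _
end

section
/- Let T be a monoidal (commutative) monad on Set and n ≥ 1. Then T preserves the equation f(x, …, x) = x for an n-ary operation f — that is, for every type A and every f : (Fin n → A) → A with f (fun _ => a) = a for all a : A, the lifted operation f̂ : (Fin n → T A) → T A, f̂ xs = f <$> ψⁿ xs, satisfies f̂ (fun _ => x) = x for all x : T A — if and only if T is n-relevant. -/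
universe u

theorem seqFin_map {T : Type u → Type u} [Monad T] [LawfulMonad T] {A B : Type u}
    (g : A → B) : ∀ {n : ℕ} (xs : Fin n → T A),
    seqFin (fun i => g <$> xs i) = (fun v => g ∘ v) <$> seqFin xs
  | 0, xs => by
    simp [seqFin]
    congr 1
    funext i; exact i.elim0
  | m + 1, xs => by
    simp only [seqFin, seqFin_map g (fun i => xs i.succ), map_seq, seq_map_assoc,
      Functor.map_map]
    congr 1
    congr 1
    funext a v i
    refine i.cases ?_ ?_ <;> simp

theorem replicate_traverse {T : Type u → Type u} [Monad T] [LawfulMonad T] {A : Type u}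
    (x : T A) : ∀ n : ℕ,
    (List.replicate n x).traverse id = List.ofFn <$> seqFin (fun _ : Fin n => x)
  | 0 => by simp [seqFin, List.traverse]
  | m + 1 => by
    simp only [List.replicate_succ, List.traverse, replicate_traverse x m, seqFin,
      map_seq, seq_map_assoc, Functor.map_map, id]
    congr 1
    congr 1
    funext a v
    simp [Function.comp_def, List.ofFn_succ]

/-- for `n ≥ 1`, `T` preserves the equation `f(x,…,x) = x` for an n-ary
operation `f` if and only if `T` is n-relevant. -/
theorem preserves_nary_idempotence_iff_nRelevant
    (T : Type u → Type u) [Monad T] [LawfulMonad T] [CommApplicative T]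
    (n : ℕ) (hn : 1 ≤ n) :
    (∀ (A : Type u) (f : (Fin n → A) → A), (∀ a : A, f (fun _ => a) = a) →
      ∀ x : T A, f <$> seqFin (fun _ => x) = x)
    ↔ NRelevant T n := by
  constructor
  · intro h A x
    -- diagonal argument: first show seqFin (fun _ => x) = (fun a _ => a) <$> x
    have key : seqFin (fun _ : Fin n => x) = (fun a (_ : Fin n) => a) <$> x := by
      have hd := h (Fin n → A) (fun M i => M i i) (fun a => rfl) ((fun a (_ : Fin n) => a) <$> x)
      have hnat := seqFin_map (T := T) (fun a (_ : Fin n) => a) (fun _ : Fin n => x)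
      rw [hnat, Functor.map_map] at hd
      simpa using hd
    rw [replicate_traverse x n, key, Functor.map_map]
    congr 1
    funext a
    simp [Function.comp_def, List.ofFn_const]
  · intro h A f hf x
    have E := h A x
    rw [replicate_traverse x n] at E
    -- bind both sides with a fallback function
    set m : List A → T A := fun l =>
      if hl : l.length = n then pure (f (fun i => l.get (Fin.cast hl.symm i))) else x with hm
    have EL := congrArg (fun y => y >>= m) E
    simp only [map_bind, bind_map_left] at EL
    have h1 : (seqFin (fun _ : Fin n => x) >>= fun v => m (List.ofFn v))
        = f <$> seqFin (fun _ : Fin n => x) := by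
      rw [← bind_pure_comp]
      congr 1
      funext v
      simp [hm, List.get_ofFn, Function.comp_def]
    have h2 : (x >>= fun a => m (List.replicate n a)) = x := by
      conv_rhs => rw [← bind_pure x]
      congr 1
      funext a
      simp [hm, List.getElem_replicate, hf]
    rw [h1, h2] at EL
    exact EL
end

section
/- Let G be a type with a binary multiplication (Mul G, not assumed associative or unital) satisfying x * (y * y) = y * x for all x, y : G. Then the convolution product on MonoidAlgebra (ZMod 2) G (finitely supported functions G →₀ ZMod 2, which is the lifted multiplication of the ℤ₂-multiset monad) satisfies ξ * (ζ * ζ) = ζ * ξ for all ξ, ζ : MonoidAlgebra (ZMod 2) G. In other words, the generalised multiset monad over the semiring ℤ₂ preserves the equation x(yy) = yx. -/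
/-!
The law forces `G` to be commutative. Over a commutative coefficient semiring of characteristic
two, squaring in a commutative magma algebra is then additive, since the cross terms `xy + yx`
cancel. Hence both sides of `ξ * (ζ * ζ) = ζ * ξ` are additive in `ξ` and in `ζ`, and it suffices
to check single elements, where it reduces to the law in `G` and to `r * r = r` in `ZMod 2`.
-/

theorem mul_comm_of_mul_mul_self_eq_mul {G : Type*} [Mul G]
    (h : ∀ x y : G, x * (y * y) = y * x) (a b : G) : a * b = b * a :=
  calc a * b = b * (a * a) := (h b a).symm
    _ = (a * a) * (b * b) := (h (a * a) b).symm
    _ = (b * b) * ((a * a) * (a * a)) := (h (b * b) (a * a)).symm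
    _ = (b * b) * (a * a) := by rw [h (a * a) a, h a a]
    _ = a * (b * b) := h (b * b) a
    _ = b * a := h a b

theorem mul_self_add_of_commute {A : Type*} [NonUnitalNonAssocSemiring A]
    (hA : ∀ a : A, a + a = 0) {x y : A} (hxy : Commute x y) :
    (x + y) * (x + y) = x * x + y * y := by
  rw [add_mul, mul_add, mul_add, hxy.eq, add_assoc, ← add_assoc (y * x), hA, zero_add]

namespace MonoidAlgebra

variable {R G : Type*}

theorem add_self_eq_zero [Semiring R] [CharP R 2] (x : R[G]) : x + x = 0 := by
  ext g
  simp [CharTwo.add_self_eq_zero]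

theorem mul_comm_of_commMagma [CommSemiring R] [CommMagma G] (x y : R[G]) : x * y = y * x := by
  induction x using induction_linear with
  | zero => simp
  | add x₁ x₂ h₁ h₂ => rw [add_mul, mul_add, h₁, h₂]
  | single a r => exact single_commute (fun b => mul_comm a b) (fun s => Commute.all r s) y

theorem mul_mul_self_eq_mul_of_mul_mul_self_eq [CommSemiring R] [CharP R 2]
    (hR : ∀ r : R, r * r = r) [Mul G] (hG : ∀ x y : G, x * (y * y) = y * x) (ξ ζ : R[G]) :
    ξ * (ζ * ζ) = ζ * ξ := by
  let _ : CommMagma G := { mul_comm := mul_comm_of_mul_mul_self_eq_mul hG }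
  induction ζ using induction_linear with
  | zero => simp
  | add ζ₁ ζ₂ h₁ h₂ =>
    rw [mul_self_add_of_commute add_self_eq_zero (mul_comm_of_commMagma ζ₁ ζ₂), mul_add, h₁, h₂,
      add_mul]
  | single a s =>
    induction ξ using induction_linear with
    | zero => simp
    | add ξ₁ ξ₂ h₁ h₂ => rw [add_mul, mul_add, h₁, h₂]
    | single x r => rw [single_mul_single, single_mul_single, single_mul_single, hR, hG, mul_comm r]

end MonoidAlgebra

/-- the generalised multiset monad over ℤ₂ preserves the equation
`x(yy) = yx`: the convolution product on `MonoidAlgebra (ZMod 2) G` (the lifted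
multiplication) satisfies it whenever the multiplication on `G` does. -/
theorem multiset_Z2_preserves_xyy_eq_yx
    {G : Type*} [Mul G] (h : ∀ x y : G, x * (y * y) = y * x)
    (ξ ζ : MonoidAlgebra (ZMod 2) G) :
    ξ * (ζ * ζ) = ζ * ξ :=
  MonoidAlgebra.mul_mul_self_eq_mul_of_mul_mul_self_eq (by decide) h ξ ζ
end

section
/- Let T be a monoidal (commutative) monad on Set. Then T is relevant if and only if T preserves the magma equation y·(x·y) = y·x, i.e. if and only if for every type A and binary operation m on A such that m y (m x y) = m y x for all x, y in A, the lifted operation on T A satisfies the same equation for all elements of T A. (The equation y(xy) = yx is a 2-discerning equation.) -/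
universe u

section Aux

variable {T : Type u → Type u} [Monad T] [LawfulMonad T]

private lemma map_seq_bind {α β γ : Type u} (f : α → β → γ) (x : T α) (y : T β) :
    f <$> x <*> y = x >>= fun a => y >>= fun b => pure (f a b) := by
  rw [seq_eq_bind_map, bind_map_left]
  simp only [bind_pure_comp]

private lemma swap_bind [CommApplicative T] {α β γ : Type u} (x : T α) (y : T β)
    (g : α → β → T γ) :
    (x >>= fun a => y >>= fun b => g a b) = y >>= fun b => x >>= fun a => g a b := by
  have h := CommApplicative.commutative_prod x y
  have h1 : ((Prod.mk <$> x <*> y) >>= fun p => g p.1 p.2)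
      = x >>= fun a => y >>= fun b => g a b := by
    rw [map_seq_bind]; simp [bind_assoc]
  have h2 : (((fun (b : β) a => (a, b)) <$> y <*> x) >>= fun p => g p.1 p.2)
      = y >>= fun b => x >>= fun a => g a b := by
    rw [map_seq_bind]; simp [bind_assoc]
  rw [← h1, ← h2, h]

/-- the carrier used in the backward direction -/
private def Fst {A : Type u} : A ⊕ (A × A) → A
  | Sum.inl a => a
  | Sum.inr p => p.1

private def Mag {A : Type u} : Option (A ⊕ A × A) → Option (A ⊕ A × A) → Option (A ⊕ A × A)
  | none, none => none
  | none, some w => some (Sum.inl (Fst w))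
  | some w, none => some (Sum.inr (Fst w, Fst w))
  | some w, some w' => some (Sum.inr (Fst w, Fst w'))

private lemma mag_law {A : Type u} (x y : Option (A ⊕ A × A)) :
    Mag y (Mag x y) = Mag y x := by
  cases x <;> cases y <;> simp [Mag, Fst]

end Aux

/-- `T` is relevant iff it preserves the 2-discerning equation
`y·(x·y) = y·x`. -/
theorem relevant_iff_preserves_yxy_eq_yx
    (T : Type u → Type u) [Monad T] [LawfulMonad T] [CommApplicative T] :
    Relevant T ↔
      ∀ (A : Type u) (m : A → A → A),
        (∀ x y : A, m y (m x y) = m y x) →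
        ∀ x y : T A, m <$> y <*> (m <$> x <*> y) = m <$> y <*> x := by
  constructor
  · -- relevance ⇒ preservation
    intro hrel A m hm x y
    rw [map_seq_bind, map_seq_bind, map_seq_bind]
    -- LHS = do a ← y; b ← x; c ← y; pure (m a (m b c))
    have step1 : (y >>= fun a => (x >>= fun b => y >>= fun c => pure (m b c)) >>=
          fun p => pure (m a p))
        = y >>= fun a => x >>= fun b => y >>= fun c => pure (m a (m b c)) := by
      simp [bind_assoc]
    rw [step1]
    -- swap the first two binds
    rw [swap_bind y x (fun a b => y >>= fun c => pure (m a (m b c)))]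
    -- inner double draw from y: use relevance
    have hrel' := hrel A y
    rw [map_seq_bind] at hrel'
    have inner : ∀ b : A, (y >>= fun a => y >>= fun c => pure (m a (m b c)))
        = y >>= fun a => pure (m a b) := by
      intro b
      have h1 : (y >>= fun a => y >>= fun c => pure (m a (m b c)))
          = (y >>= fun a => y >>= fun c => pure ((a, c) : A × A)) >>=
              fun p => pure (m p.1 (m b p.2)) := by
        simp [bind_assoc]
      have h2 : ((fun a => ((a, a) : A × A)) <$> y) >>= (fun p => pure (m p.1 (m b p.2)))
          = y >>= fun a => pure (m a (m b a)) := by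
        rw [map_eq_pure_bind]; simp [bind_assoc]
      rw [h1, hrel', h2]
      simp only [hm]
    simp only [inner]
    exact (swap_bind y x (fun a b => pure (m a b))).symm
  · -- preservation ⇒ relevance
    intro H A x
    by_cases hA : Nonempty A
    · obtain ⟨a₀⟩ := hA
      have key := H (Option (A ⊕ A × A)) Mag mag_law (pure none)
        ((fun a => some (Sum.inl a)) <$> x)
      -- unfold both sides of key into bind form
      rw [map_seq_bind, map_seq_bind, map_seq_bind] at key
      simp only [bind_map_left, pure_bind, bind_pure] at key
      -- now post-compose with the retraction r
      have key2 := congrArg (fun z => (fun w : Option (A ⊕ A × A) =>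
          match w with
          | some (Sum.inr p) => p
          | _ => (a₀, a₀)) <$> z) key
      simp only [map_bind, map_pure] at key2
      rw [map_seq_bind, map_eq_pure_bind]
      simpa [Mag, Fst] using key2
    · -- A is empty: both sides are binds of functions out of A, hence equal
      rw [map_seq_bind, map_eq_pure_bind]
      congr 1
      funext a
      exact absurd ⟨a⟩ hA
end

section
/- Let T be a monoidal (commutative) monad on Set. Then T is relevant if and only if T preserves the magma equation (y·y)·x = y·x, i.e. if and only if for every type A and binary operation m on A such that m (m y y) x = m y x for all x, y in A, the lifted operation on T A satisfies the same equation for all elements of T A. -/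
universe u

private lemma mapseq {T : Type u → Type u} [Monad T] [LawfulMonad T]
    {α β γ : Type u} (h : α → β → γ) (u : T α) (v : T β) :
    h <$> u <*> v = u >>= fun a => v >>= fun b => pure (h a b) := by
  rw [seq_eq_bind, map_eq_bind_pure_comp]
  simp [bind_assoc, Function.comp, map_eq_bind_pure_comp]

/-- The auxiliary magma used in the backward direction. -/
private def mAux (A : Type u) :
    Option (A ⊕ (A × A)) → Option (A ⊕ (A × A)) → Option (A ⊕ (A × A))
  | none, _ => none
  | some (Sum.inl a), none => some (Sum.inr (a, a))
  | some (Sum.inl a), some (Sum.inl c) => some (Sum.inr (a, c))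
  | some (Sum.inl a), some (Sum.inr _) => some (Sum.inr (a, a))
  | some (Sum.inr p), none => some (Sum.inr p)
  | some (Sum.inr (a, _)), some (Sum.inl c) => some (Sum.inr (a, c))
  | some (Sum.inr p), some (Sum.inr _) => some (Sum.inr p)

private lemma mAux_law (A : Type u) (x y : Option (A ⊕ (A × A))) :
    mAux A (mAux A y y) x = mAux A y x := by
  rcases y with _ | (a | ⟨a, b⟩) <;> rcases x with _ | (c | ⟨c, d⟩) <;> rfl

/-- `T` is relevant iff it preserves the equation `(y·y)·x = y·x`. -/
theorem relevant_iff_preserves_yyx_eq_yx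
    (T : Type u → Type u) [Monad T] [LawfulMonad T] [CommApplicative T] :
    Relevant T ↔
      ∀ (A : Type u) (m : A → A → A),
        (∀ x y : A, m (m y y) x = m y x) →
        ∀ x y : T A, m <$> (m <$> y <*> y) <*> x = m <$> y <*> x := by
  constructor
  · intro hRel A m hm x y
    -- from relevance: m <$> y <*> y = (fun a => m a a) <$> y
    have hrel := hRel A y
    rw [mapseq] at hrel
    have h2 := congrArg (fun z => (fun p : A × A => m p.1 p.2) <$> z) hrel
    simp only [map_bind, map_pure, Functor.map_map] at h2
    have h1 : m <$> y <*> y = (fun a => m a a) <$> y := by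
      rw [mapseq]; exact h2
    rw [h1, mapseq, mapseq, map_eq_bind_pure_comp, bind_assoc]
    simp only [Function.comp, pure_bind, hm]
  · intro H A x
    have E := H (Option (A ⊕ (A × A))) (mAux A) (mAux_law A)
      (pure none) ((fun a => some (Sum.inl a)) <$> x)
    simp only [mapseq] at E
    simp only [map_eq_bind_pure_comp, bind_assoc, pure_bind, Function.comp] at E
    simp only [mAux] at E
    rcases isEmpty_or_nonempty A with hA | hA
    · rw [mapseq, map_eq_bind_pure_comp]
      congr 1
      funext a
      exact isEmptyElim a
    · haveI : Nonempty (A × A) := ⟨(Classical.arbitrary A, Classical.arbitrary A)⟩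
      let r : Option (A ⊕ (A × A)) → A × A := fun c =>
        match c with
        | some (Sum.inr p) => p
        | some (Sum.inl a) => (a, a)
        | none => Classical.arbitrary _
      have E'' := congrArg (fun z => r <$> z) E
      simp only [map_bind, map_pure, r] at E''
      rw [mapseq, map_eq_bind_pure_comp]
      simpa [Function.comp, map_eq_bind_pure_comp] using E''
end

section
/- Let A be a type with a binary multiplication (Mul A, not assumed associative or unital) satisfying x * (y * y) = y * x for all x, y : A. Then the multiplication is commutative: x * y = y * x for all x, y : A. (Hence the equation x(yy) = yx equationally implies xy = yx, so it is not 2-discerning.) -/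
/-- in any magma, the law `x * (y * y) = y * x` implies
commutativity `x * y = y * x`. -/
theorem mul_comm_of_xyy_eq_yx
    {A : Type*} [Mul A] (h : ∀ x y : A, x * (y * y) = y * x) :
    ∀ x y : A, x * y = y * x := by
  have sq : ∀ a : A, (a * a) * (a * a) = a * a := fun a => by rw [h (a*a) a, h a a]
  have hl : ∀ a b : A, (a * a) * b = a * b := fun a b => by
    rw [← h b (a*a), sq, h b a]
  intro x y
  calc x * y = y * (x * x) := (h y x).symm
    _ = (x * x) * (y * y) := (h (x*x) y).symm
    _ = x * (y * y) := hl x (y*y)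
    _ = y * x := h x y
end

section
/- Let T be an affine monoidal (commutative) monad on Set, L a signature, V a type of variables, and t₁ = t₂ a strict-drop equation of L-terms over V. Then T preserves the equation t₁ = t₂. -/
open FirstOrder FirstOrder.Language

universe u v w

/-- the equation t₁ = t₂ is linear: every variable occurring in t₁ or t₂ occurs
exactly once in t₁ and exactly once in t₂. -/
def Linear {L : Language} {V : Type w} (t₁ t₂ : L.Term V) : Prop :=
  ∀ v : V, (occCount v t₁ ≠ 0 ∨ occCount v t₂ ≠ 0) →
    occCount v t₁ = 1 ∧ occCount v t₂ = 1

section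
set_option linter.unusedSectionVars false
variable {T : Type u → Type u} [Monad T] [LawfulMonad T]

theorem map_map₂ {α β γ δ : Type u} (h : γ → δ) (f : α → β → γ) (x : T α) (y : T β) :
    h <$> (f <$> x <*> y) = (fun a b => h (f a b)) <$> x <*> y := by
  rw [map_seq, Functor.map_map]; simp only [Function.comp_def]

theorem map₂_map_left {α β γ δ : Type u} (f : α → β → γ) (h : δ → α) (x : T δ) (y : T β) :
    f <$> (h <$> x) <*> y = (fun a b => f (h a) b) <$> x <*> y := by
  rw [Functor.map_map]

theorem map₂_map_right {α β γ δ : Type u} (f : α → β → γ) (h : δ → β) (x : T α) (y : T δ) :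
    f <$> x <*> (h <$> y) = (fun a b => f a (h b)) <$> x <*> y := by
  rw [seq_map_assoc, Functor.map_map]; simp only [Function.comp_def]

theorem map₂_map₂_left {α β γ δ ε : Type u} (f : γ → δ → ε) (g : α → β → γ)
    (x : T α) (y : T β) (z : T δ) :
    f <$> (g <$> x <*> y) <*> z = (fun a b c => f (g a b) c) <$> x <*> y <*> z := by
  rw [map_map₂]

theorem map₂_map₂_right {α β γ δ ε : Type u} (f : α → δ → ε) (g : β → γ → δ)
    (x : T α) (y : T β) (z : T γ) :
    f <$> x <*> (g <$> y <*> z) = (fun a b c => f a (g b c)) <$> x <*> y <*> z := by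
  rw [seq_assoc, Functor.map_map, map₂_map_right]
  simp only [Function.comp_def]

theorem seqFin_zero {α : Type u} (xs : Fin 0 → T α) :
    seqFin xs = pure (fun i => i.elim0) := rfl

theorem seqFin_succ {α : Type u} {n : ℕ} (xs : Fin (n + 1) → T α) :
    seqFin xs = (fun a f => Fin.cons a f) <$> xs 0 <*> seqFin (fun i => xs i.succ) := rfl

variable (haff : Subsingleton (T PUnit.{u+1}))
include haff

theorem aff_const {α β : Type u} (c : β) (x : T α) : (fun _ => c) <$> x = pure c := by
  have h2 : (fun _ : α => PUnit.unit) <$> x = pure PUnit.unit := @Subsingleton.elim _ haff _ _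
  have h1 : (fun _ : α => c) <$> x = (fun _ : PUnit.{u+1} => c) <$> ((fun _ => PUnit.unit) <$> x) := by
    rw [Functor.map_map]
  rw [h1, h2, map_pure]

theorem aff_drop_right {α β : Type u} (x : T α) (y : T β) :
    (fun a _ => a) <$> x <*> y = x := by
  have h1 : ((fun (a : α) (_ : β) => a) <$> x <*> y)
      = ((fun (a : α) (_ : PUnit.{u+1}) => a) <$> x <*> ((fun _ => PUnit.unit) <$> y)) := by
    rw [map₂_map_right]
  rw [h1, aff_const haff, seq_pure, Functor.map_map]
  simp

theorem aff_drop_left {α β : Type u} (x : T α) (y : T β) :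
    (fun _ b => b) <$> x <*> y = y := by
  have h1 : ((fun (_ : α) (b : β) => b) <$> x <*> y)
      = ((fun (_ : PUnit.{u+1}) (b : β) => b) <$> ((fun _ => PUnit.unit) <$> x) <*> y) := by
    rw [map₂_map_left]
  rw [h1, aff_const haff]
  exact pure_id'_seq y

theorem subsingleton_T {α : Type u} [IsEmpty α] : Subsingleton (T α) := by
  constructor
  intro x y
  have h : (fun (a : α) (_ : α) => a) = (fun (_ : α) (b : α) => b) := by
    funext a; exact isEmptyElim a
  calc x = (fun a _ => a) <$> x <*> y := (aff_drop_right haff x y).symm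
    _ = (fun _ b => b) <$> x <*> y := by rw [h]
    _ = y := aff_drop_left haff x y

theorem seqFin_proj {α : Type u} : ∀ {n : ℕ} (xs : Fin n → T α) (i : Fin n),
    (fun g => g i) <$> seqFin xs = xs i := by
  intro n
  induction n with
  | zero => exact fun xs i => i.elim0
  | succ n ih =>
    intro xs i
    rw [seqFin_succ, map_map₂]
    induction i using Fin.cases with
    | zero =>
      simp only [Fin.cons_zero]
      exact aff_drop_right haff _ _
    | succ i =>
      simp only [Fin.cons_succ]
      have : (fun (a : α) (b : Fin n → α) => b i) <$> xs 0 <*> seqFin (fun i => xs i.succ)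
          = (fun g : Fin n → α => g i) <$> ((fun (_ : α) (b : Fin n → α) => b) <$> xs 0 <*> seqFin (fun i => xs i.succ)) := by
        rw [map_map₂]
      rw [this, aff_drop_left haff, ih]
end

theorem cons_insertNth {α : Type*} {n : ℕ} (j : Fin (n + 1)) (b a : α) (g : Fin n → α) :
    Fin.cons a (j.insertNth b g) = Fin.insertNth (α := fun _ => α) j.succ b (Fin.cons a g) := by
  funext i
  rcases eq_or_ne i j.succ with rfl | hne
  · rw [Fin.insertNth_apply_same, Fin.cons_succ, Fin.insertNth_apply_same]
  · obtain ⟨k, rfl⟩ := Fin.exists_succAbove_eq hne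
    rw [Fin.insertNth_apply_succAbove]
    induction k using Fin.cases with
    | zero =>
      rw [Fin.succ_succAbove_zero]
      simp
    | succ k' =>
      rw [Fin.succ_succAbove_succ, Fin.cons_succ, Fin.cons_succ,
        Fin.insertNth_apply_succAbove]


section
set_option linter.unusedSectionVars false
variable {T : Type u → Type u} [Monad T] [LawfulMonad T] [CommApplicative T]

theorem seqFin_rot_zero {α : Type u} {n : ℕ} (xs : Fin (n + 1) → T α) :
    seqFin xs = (fun a g => Fin.insertNth (α := fun _ => α) 0 a g) <$> xs 0
      <*> seqFin ((0 : Fin (n + 1)).removeNth xs) := by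
  rw [seqFin_succ]
  have h1 : (fun (a : α) (g : Fin n → α) => Fin.cons a g)
      = fun a g => Fin.insertNth (α := fun _ => α) 0 a g := by
    funext a g; exact (Fin.insertNth_zero' a g).symm
  have h2 : (fun i : Fin n => xs i.succ) = (0 : Fin (n + 1)).removeNth xs := by
    funext i; simp [Fin.removeNth]
  rw [h1, h2]

theorem seqFin_rot {α : Type u} : ∀ {n : ℕ} (xs : Fin (n + 1) → T α) (j : Fin (n + 1)),
    seqFin xs = (fun a g => Fin.insertNth (α := fun _ => α) j a g) <$> xs j
      <*> seqFin (j.removeNth xs) := by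
  intro n
  induction n with
  | zero =>
    intro xs j
    have hj : j = 0 := Fin.fin_one_eq_zero j
    subst hj
    exact seqFin_rot_zero xs
  | succ n ih =>
    intro xs j
    induction j using Fin.cases with
    | zero => exact seqFin_rot_zero xs
    | succ j' =>
      rw [seqFin_succ, ih (fun i => xs i.succ) j']
      rw [seqFin_succ ((j'.succ).removeNth xs)]
      have h0 : (j'.succ).removeNth xs 0 = xs 0 := by
        simp [Fin.removeNth]
      have htail : (fun i : Fin n => (j'.succ).removeNth xs i.succ)
          = j'.removeNth (fun i => xs i.succ) := by
        funext i; simp [Fin.removeNth, Fin.succ_succAbove_succ]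
      rw [h0, htail, map₂_map₂_right, map₂_map₂_right]
      have hcomm : ((fun (a b : α) (g : Fin n → α) => Fin.cons a (Fin.insertNth (α := fun _ => α) j' b g)) <$> xs 0 <*> xs j'.succ)
          = ((fun (b a : α) (g : Fin n → α) => Fin.insertNth (α := fun _ => α) j'.succ b (Fin.cons a g)) <$> xs j'.succ <*> xs 0) := by
        rw [CommApplicative.commutative_map]
        have hfun : (flip fun (a b : α) (g : Fin n → α) => Fin.cons a (Fin.insertNth (α := fun _ => α) j' b g))
            = (fun (b a : α) (g : Fin n → α) => Fin.insertNth (α := fun _ => α) j'.succ b (Fin.cons a g)) := by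
          funext b a g
          exact cons_insertNth j' b a g
        rw [hfun]
      rw [hcomm]

theorem seqFin_comp {α : Type u} (haff : Subsingleton (T PUnit.{u+1})) :
    ∀ {k n : ℕ} (m : Fin k → Fin n), Function.Injective m → ∀ (xs : Fin n → T α),
    (fun g => g ∘ m) <$> seqFin xs = seqFin (xs ∘ m) := by
  intro k
  induction k with
  | zero =>
    intro n m _ xs
    have h : (fun (g : Fin n → α) => g ∘ m) = fun _ => (fun i : Fin 0 => i.elim0) := by
      funext g; funext i; exact i.elim0
    rw [h, aff_const haff]
    rfl
  | succ k ih =>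
    intro n m hm xs
    cases n with
    | zero => exact (m 0).elim0
    | succ n =>
      have hne : ∀ i : Fin k, m i.succ ≠ m 0 := fun i h => Fin.succ_ne_zero i (hm h)
      choose m' hm' using fun i => Fin.exists_succAbove_eq (hne i)
      have hm'inj : Function.Injective m' := by
        intro i j h
        have hmm : m i.succ = m j.succ := by rw [← hm' i, ← hm' j, h]
        exact Fin.succ_injective _ (hm hmm)
      have hfun : (fun (a : α) (g' : Fin n → α) => (Fin.insertNth (α := fun _ => α) (m 0) a g') ∘ m)
          = fun (a : α) (g' : Fin n → α) => Fin.cons (α := fun _ => α) a (g' ∘ m') := by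
        funext a g'
        funext i
        induction i using Fin.cases with
        | zero =>
          show Fin.insertNth (α := fun _ => α) (m 0) a g' (m 0) = a
          rw [Fin.insertNth_apply_same]
        | succ i =>
          show Fin.insertNth (α := fun _ => α) (m 0) a g' (m i.succ) = g' (m' i)
          rw [← hm' i, Fin.insertNth_apply_succAbove]
      rw [seqFin_rot xs (m 0), map_map₂, hfun]
      have hsplit : (fun (a : α) (g' : Fin n → α) => Fin.cons (α := fun _ => α) a (g' ∘ m')) <$> xs (m 0)
            <*> seqFin ((m 0).removeNth xs)
          = (fun a f => Fin.cons a f) <$> xs (m 0)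
            <*> ((fun g' => g' ∘ m') <$> seqFin ((m 0).removeNth xs)) := by
        rw [map₂_map_right]
      rw [hsplit, ih m' hm'inj, seqFin_succ]
      congr 1
      have : (m 0).removeNth xs ∘ m' = fun i => (xs ∘ m) i.succ := by
        funext i
        show xs ((m 0).succAbove (m' i)) = xs (m i.succ)
        rw [hm' i]
      rw [this]

theorem seqFin_comp₂ {α : Type u} (haff : Subsingleton (T PUnit.{u+1})) :
    ∀ {p q n : ℕ} (mP : Fin p → Fin n) (mQ : Fin q → Fin n),
      Function.Injective mP → Function.Injective mQ → (∀ i j, mP i ≠ mQ j) →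
      ∀ (xs : Fin n → T α),
      (fun g => (g ∘ mP, g ∘ mQ)) <$> seqFin xs
        = Prod.mk <$> seqFin (xs ∘ mP) <*> seqFin (xs ∘ mQ) := by
  intro p
  induction p with
  | zero =>
    intro q n mP mQ _ hQ _ xs
    have h : (fun (g : Fin n → α) => (g ∘ mP, g ∘ mQ))
        = fun g => ((fun i : Fin 0 => i.elim0), g ∘ mQ) := by
      funext g
      exact Prod.ext (funext fun i => i.elim0) rfl
    rw [h, ← Functor.map_map, seqFin_comp haff mQ hQ]
    show _ = Prod.mk <$> pure (fun i : Fin 0 => i.elim0) <*> seqFin (xs ∘ mQ)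
    rw [map_pure, pure_seq]
  | succ p ihp =>
    intro q n mP mQ hP hQ hPQ xs
    cases n with
    | zero => exact (mP 0).elim0
    | succ n =>
      have hneP : ∀ i : Fin p, mP i.succ ≠ mP 0 := fun i h => Fin.succ_ne_zero i (hP h)
      choose mP' hmP' using fun i => Fin.exists_succAbove_eq (hneP i)
      have hneQ : ∀ i : Fin q, mQ i ≠ mP 0 := fun i h => hPQ 0 i h.symm
      choose mQ' hmQ' using fun i => Fin.exists_succAbove_eq (hneQ i)
      have hP'inj : Function.Injective mP' := by
        intro i j h
        have hmm : mP i.succ = mP j.succ := by rw [← hmP' i, ← hmP' j, h]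
        exact Fin.succ_injective _ (hP hmm)
      have hQ'inj : Function.Injective mQ' := by
        intro i j h
        apply hQ
        rw [← hmQ' i, ← hmQ' j, h]
      have hPQ' : ∀ i jj, mP' i ≠ mQ' jj := fun i jj h =>
        hPQ i.succ jj (by rw [← hmP' i, ← hmQ' jj, h])
      rw [seqFin_rot xs (mP 0), map_map₂]
      have hfun : (fun (a : α) (g' : Fin n → α) =>
            ((Fin.insertNth (α := fun _ => α) (mP 0) a g') ∘ mP,
             (Fin.insertNth (α := fun _ => α) (mP 0) a g') ∘ mQ))
          = fun (a : α) (g' : Fin n → α) =>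
            (Fin.cons (α := fun _ => α) a (g' ∘ mP'), g' ∘ mQ') := by
        funext a g'
        refine Prod.ext ?_ ?_
        · funext i
          induction i using Fin.cases with
          | zero =>
            show Fin.insertNth (α := fun _ => α) (mP 0) a g' (mP 0) = a
            rw [Fin.insertNth_apply_same]
          | succ i =>
            show Fin.insertNth (α := fun _ => α) (mP 0) a g' (mP i.succ) = g' (mP' i)
            rw [← hmP' i, Fin.insertNth_apply_succAbove]
        · funext i
          show Fin.insertNth (α := fun _ => α) (mP 0) a g' (mQ i) = g' (mQ' i)
          rw [← hmQ' i, Fin.insertNth_apply_succAbove]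
      rw [hfun]
      have hsplit : (fun (a : α) (g' : Fin n → α) =>
            (Fin.cons (α := fun _ => α) a (g' ∘ mP'), g' ∘ mQ')) <$> xs (mP 0)
            <*> seqFin ((mP 0).removeNth xs)
          = (fun (a : α) (pr : (Fin p → α) × (Fin q → α)) =>
              (Fin.cons (α := fun _ => α) a pr.1, pr.2)) <$> xs (mP 0)
            <*> ((fun g' => (g' ∘ mP', g' ∘ mQ')) <$> seqFin ((mP 0).removeNth xs)) := by
        rw [map₂_map_right]
      rw [hsplit, ihp mP' mQ' hP'inj hQ'inj hPQ' ((mP 0).removeNth xs), map₂_map₂_right,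
        seqFin_succ (xs ∘ mP), map₂_map₂_left]
      have hA : (mP 0).removeNth xs ∘ mP' = fun i => (xs ∘ mP) i.succ := by
        funext i
        show xs ((mP 0).succAbove (mP' i)) = xs (mP i.succ)
        rw [hmP' i]
      have hB : (mP 0).removeNth xs ∘ mQ' = xs ∘ mQ := by
        funext i
        show xs ((mP 0).succAbove (mQ' i)) = xs (mQ i)
        rw [hmQ' i]
      rw [hA, hB]
      rfl

theorem indep_pair {α B C D : Type u} (haff : Subsingleton (T PUnit.{u+1})) [Nonempty α]
    {n : ℕ} (xs : Fin n → T α) (P : Fin n → Prop)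
    (F : (Fin n → α) → B) (H : (Fin n → α) → C) (f : B → C → D)
    (hF : ∀ g g', (∀ i, P i → g i = g' i) → F g = F g')
    (hH : ∀ g g', (∀ i, ¬ P i → g i = g' i) → H g = H g') :
    f <$> (F <$> seqFin xs) <*> (H <$> seqFin xs)
      = (fun g => f (F g) (H g)) <$> seqFin xs := by
  classical
  set S : Finset (Fin n) := Finset.univ.filter P with hS
  set eS := S.equivFin with heS
  set eC := Sᶜ.equivFin with heC
  set mP : Fin S.card → Fin n := fun i => (eS.symm i : Fin n) with hmP
  set mQ : Fin Sᶜ.card → Fin n := fun i => (eC.symm i : Fin n) with hmQ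
  have hmPinj : Function.Injective mP := fun i j h =>
    eS.symm.injective (Subtype.coe_injective h)
  have hmQinj : Function.Injective mQ := fun i j h =>
    eC.symm.injective (Subtype.coe_injective h)
  have hmPQ : ∀ i j, mP i ≠ mQ j := by
    intro i j h
    have h1 : mP i ∈ S := (eS.symm i).2
    have h2 : mQ j ∈ Sᶜ := (eC.symm j).2
    rw [h] at h1
    exact (Finset.mem_compl.mp h2) h1
  set F₀ : (Fin S.card → α) → B :=
    fun h => F (fun i => if hi : i ∈ S then h (eS ⟨i, hi⟩) else Classical.arbitrary α) with hF₀def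
  set H₀ : (Fin Sᶜ.card → α) → C :=
    fun h => H (fun i => if hi : i ∈ Sᶜ then h (eC ⟨i, hi⟩) else Classical.arbitrary α) with hH₀def
  have hF₀ : ∀ g : Fin n → α, F₀ (g ∘ mP) = F g := by
    intro g
    apply hF
    intro i hPi
    have hi : i ∈ S := by simp [hS, hPi]
    rw [dif_pos hi]
    show g (mP (eS ⟨i, hi⟩)) = g i
    simp [hmP]
  have hH₀ : ∀ g : Fin n → α, H₀ (g ∘ mQ) = H g := by
    intro g
    apply hH
    intro i hPi
    have hi : i ∈ Sᶜ := by simp [hS, Finset.mem_compl, hPi]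
    rw [dif_pos hi]
    show g (mQ (eC ⟨i, hi⟩)) = g i
    simp [hmQ]
  have hFeq : F = fun g => F₀ (g ∘ mP) := funext fun g => (hF₀ g).symm
  have hHeq : H = fun g => H₀ (g ∘ mQ) := funext fun g => (hH₀ g).symm
  have hFm : F <$> seqFin xs = F₀ <$> seqFin (xs ∘ mP) := by
    rw [hFeq, ← seqFin_comp haff mP hmPinj xs, Functor.map_map]
  have hHm : H <$> seqFin xs = H₀ <$> seqFin (xs ∘ mQ) := by
    rw [hHeq, ← seqFin_comp haff mQ hmQinj xs, Functor.map_map]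
  rw [hFm, hHm, map₂_map_left, map₂_map_right]
  have hRHS : (fun g => f (F g) (H g)) = (fun pr : (Fin S.card → α) × (Fin Sᶜ.card → α) =>
      f (F₀ pr.1) (H₀ pr.2)) ∘ (fun g => (g ∘ mP, g ∘ mQ)) := by
    funext g
    show f (F g) (H g) = f (F₀ (g ∘ mP)) (H₀ (g ∘ mQ))
    rw [hF₀, hH₀]
  have hcomp : ((fun pr : (Fin S.card → α) × (Fin Sᶜ.card → α) => f (F₀ pr.1) (H₀ pr.2))
        ∘ fun g : Fin n → α => (g ∘ mP, g ∘ mQ)) <$> seqFin xs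
      = (fun pr : (Fin S.card → α) × (Fin Sᶜ.card → α) => f (F₀ pr.1) (H₀ pr.2))
        <$> ((fun g : Fin n → α => (g ∘ mP, g ∘ mQ)) <$> seqFin xs) :=
    (Functor.map_map (fun g : Fin n → α => (g ∘ mP, g ∘ mQ)) (fun pr : (Fin S.card → α) × (Fin Sᶜ.card → α) => f (F₀ pr.1) (H₀ pr.2)) (seqFin xs)).symm
  rw [hRHS, hcomp, seqFin_comp₂ haff mP mQ hmPinj hmQinj hmPQ xs, map_map₂]

theorem indep_tuple {α : Type u} (haff : Subsingleton (T PUnit.{u+1})) [Nonempty α] {n : ℕ}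
    (xs : Fin n → T α) :
    ∀ {l : ℕ} (G : Fin l → (Fin n → α) → α) (P : Fin l → Fin n → Prop),
    (∀ j g g', (∀ i, P j i → g i = g' i) → G j g = G j g') →
    (∀ j j', j ≠ j' → ∀ i, P j i → ¬ P j' i) →
    seqFin (fun j => G j <$> seqFin xs) = (fun g j => G j g) <$> seqFin xs := by
  intro l
  induction l with
  | zero =>
    intro G P _ _
    have h : (fun (g : Fin n → α) (j : Fin 0) => G j g) = fun _ => (fun j : Fin 0 => j.elim0) := by
      funext g
      funext j
      exact j.elim0
    rw [h, aff_const haff]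
    rfl
  | succ l ih =>
    intro G P hdep hdisj
    rw [seqFin_succ]
    have htail : seqFin (fun i : Fin l => (fun j => G j <$> seqFin xs) i.succ)
        = (fun g (j : Fin l) => G j.succ g) <$> seqFin xs :=
      ih (fun i => G i.succ) (fun i => P i.succ) (fun j => hdep j.succ)
        (fun j j' hjj' => hdisj j.succ j'.succ (fun h => hjj' (Fin.succ_injective _ h)))
    rw [htail]
    have hpair := indep_pair (B := α) (C := Fin l → α) (D := Fin (l+1) → α) haff xs (P 0)
      (G 0) (fun g j => G j.succ g) (fun a f => Fin.cons a f)
      (hdep 0)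
      (by
        intro g g' hagree
        funext j
        exact hdep j.succ g g' (fun i hi => hagree i (hdisj j.succ 0 (Fin.succ_ne_zero j) i hi)))
    rw [hpair]
    congr 1
    funext g
    funext j
    induction j using Fin.cases with
    | zero => simp
    | succ j => simp
end


section Terms
variable {L : Language} {V : Type w}

theorem occ_var_self (v : V) : occCount (L := L) v (.var v) = 1 := by
  simp [occCount]

theorem occ_func (v : V) {l : ℕ} (f : L.Functions l) (ts : Fin l → L.Term V) :
    occCount v (.func f ts) = ∑ i, occCount v (ts i) := rfl

theorem mem_varFinset_of_occ [DecidableEq V] :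
    ∀ (t : L.Term V) (v : V), occCount v t ≠ 0 → v ∈ t.varFinset := by
  intro t
  induction t with
  | var w =>
    intro v h
    have hwv : w = v := by
      by_contra hne
      simp [occCount, hne] at h
    subst hwv
    simp [Term.varFinset]
  | func f ts ih =>
    intro v h
    rw [occ_func] at h
    obtain ⟨i, hi⟩ : ∃ i, occCount v (ts i) ≠ 0 := by
      by_contra hall
      push_neg at hall
      exact h (Finset.sum_eq_zero fun i _ => hall i)
    exact Finset.mem_biUnion.mpr ⟨i, Finset.mem_univ i, ih i v hi⟩

theorem realize_congr_occ {A : Type*} [L.Structure A] :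
    ∀ (t : L.Term V) (v₁ v₂ : V → A), (∀ v, occCount v t ≠ 0 → v₁ v = v₂ v) →
      t.realize v₁ = t.realize v₂ := by
  intro t
  induction t with
  | var w =>
    intro v₁ v₂ h
    exact h w (by rw [occ_var_self]; exact one_ne_zero)
  | func f ts ih =>
    intro v₁ v₂ h
    simp only [Term.realize]
    congr 1
    funext i
    apply ih i
    intro v hv
    apply h v
    rw [occ_func]
    intro hz
    exact hv (Finset.sum_eq_zero_iff.mp hz i (Finset.mem_univ i))

end Terms

section Main
variable {T : Type u → Type u} [Monad T] [LawfulMonad T] [CommApplicative T]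
variable {L : Language} {V : Type w}

theorem main_lemma (haff : Subsingleton (T PUnit.{u+1})) {A : Type u} [iA : L.Structure A]
    [Nonempty A] :
    ∀ (t : L.Term V) {n : ℕ} (σ : V → Fin n) (xs : Fin n → T A) (val : V → T A),
    (∀ v, occCount v t ≤ 1) →
    (∀ v w, occCount v t ≠ 0 → occCount w t ≠ 0 → σ v = σ w → v = w) →
    (∀ v, occCount v t ≠ 0 → val v = xs (σ v)) →
    @Term.realize L (T A) (liftedStructure T) V val t
      = (fun g : Fin n → A => t.realize (g ∘ σ)) <$> seqFin xs := by
  intro t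
  induction t with
  | var w =>
    intro n σ xs val hocc hinj hcompat
    show val w = (fun g : Fin n → A => (g ∘ σ) w) <$> seqFin xs
    rw [hcompat w (by rw [occ_var_self]; exact one_ne_zero)]
    exact (seqFin_proj haff xs (σ w)).symm
  | func f ts ih =>
    intro n σ xs val hocc hinj hcompat
    have hsubne : ∀ (j : Fin _) (v : V), occCount v (ts j) ≠ 0 →
        occCount (L := L) v (.func f ts) ≠ 0 := by
      intro j v hv hz
      rw [occ_func] at hz
      exact hv (Finset.sum_eq_zero_iff.mp hz j (Finset.mem_univ j))
    show Structure.funMap f <$> seqFin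
          (fun i => @Term.realize L (T A) (liftedStructure T) V val (ts i))
        = (fun g : Fin n → A => Structure.funMap f fun i => (ts i).realize (g ∘ σ)) <$> seqFin xs
    have hcomps : (fun i => @Term.realize L (T A) (liftedStructure T) V val (ts i))
        = fun i => (fun g : Fin n → A => (ts i).realize (g ∘ σ)) <$> seqFin xs := by
      funext i
      refine ih i σ xs val ?_ ?_ ?_
      · intro v
        refine le_trans ?_ (hocc v)
        rw [occ_func]
        exact Finset.single_le_sum (f := fun i => occCount v (ts i)) (fun i _ => Nat.zero_le _) (Finset.mem_univ i)
      · intro v w hv hw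
        exact hinj v w (hsubne i v hv) (hsubne i w hw)
      · intro v hv
        exact hcompat v (hsubne i v hv)
    rw [hcomps]
    have haux := indep_tuple haff xs (fun i g => (ts i).realize (g ∘ σ))
      (fun i x => ∃ v, occCount v (ts i) ≠ 0 ∧ σ v = x)
      (by
        intro j g g' hagree
        apply realize_congr_occ
        intro v hv
        exact hagree (σ v) ⟨v, hv, rfl⟩)
      (by
        intro j j' hjj' x hPj hPj'
        obtain ⟨v, hv, hσv⟩ := hPj
        obtain ⟨w, hw, hσw⟩ := hPj'
        have hvw : v = w := hinj v w (hsubne j v hv) (hsubne j' w hw) (hσv.trans hσw.symm)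
        subst hvw
        have hle : ({j, j'} : Finset (Fin _)).sum (fun i => occCount v (ts i))
            ≤ ∑ i, occCount v (ts i) :=
          Finset.sum_le_sum_of_subset (Finset.subset_univ _)
        rw [Finset.sum_pair hjj'] at hle
        have h1 : 1 ≤ occCount v (ts j) := Nat.one_le_iff_ne_zero.mpr hv
        have h2 : 1 ≤ occCount v (ts j') := Nat.one_le_iff_ne_zero.mpr hw
        have h3 := hocc v
        rw [occ_func] at h3
        omega)
    rw [haux, Functor.map_map]
end Main


/-- an affine monoidal monad preserves strict-drop equations. -/
theorem affine_preserves_strict_drop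
    (T : Type u → Type u) [Monad T] [LawfulMonad T] [CommApplicative T]
    (haff : Subsingleton (T PUnit.{u+1}))
    (L : Language) [∀ n, IsEmpty (L.Relations n)] (V : Type w)
    (t₁ t₂ : L.Term V)
    (hnotlin : ¬ Linear t₁ t₂)
    (hatmost : ∀ v : V, occCount v t₁ ≤ 1 ∧ occCount v t₂ ≤ 1) :
    Preserves T t₁ t₂ := by
  intro A inst hval val
  rcases isEmpty_or_nonempty A with hA | hA
  · exact @Subsingleton.elim _ (subsingleton_T haff) _ _
  · classical
    haveI := hA
    set S : Finset V := t₁.varFinset ∪ t₂.varFinset with hS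
    set e := S.equivFin with he
    set σ : V → Fin (S.card + 1) :=
      fun v => if h : v ∈ S then (e ⟨v, h⟩).castSucc else Fin.last _ with hσ
    set xs : Fin (S.card + 1) → T A :=
      fun i => if h : i = Fin.last _ then pure (Classical.arbitrary A)
        else val ((e.symm (i.castPred h)) : V) with hxs
    have hmem : ∀ v : V, v ∈ S → val v = xs (σ v) := by
      intro v hv
      have h1 : σ v = (e ⟨v, hv⟩).castSucc := by
        simp only [hσ]
        rw [dif_pos hv]
      rw [h1]
      simp only [hxs]
      rw [dif_neg (Fin.castSucc_lt_last _).ne, Fin.castPred_castSucc]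
      simp
    have hinjS : ∀ v w : V, v ∈ S → w ∈ S → σ v = σ w → v = w := by
      intro v w hv hw h
      simp only [hσ] at h
      rw [dif_pos hv, dif_pos hw] at h
      have h2 := e.injective (Fin.castSucc_injective _ h)
      exact Subtype.mk_eq_mk.mp h2
    have hm1 : ∀ v, occCount v t₁ ≠ 0 → v ∈ S :=
      fun v h => Finset.mem_union_left _ (mem_varFinset_of_occ t₁ v h)
    have hm2 : ∀ v, occCount v t₂ ≠ 0 → v ∈ S :=
      fun v h => Finset.mem_union_right _ (mem_varFinset_of_occ t₂ v h)
    rw [main_lemma (iA := inst) haff t₁ σ xs val (fun v => (hatmost v).1)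
        (fun v w hv hw => hinjS v w (hm1 v hv) (hm1 w hw))
        (fun v hv => hmem v (hm1 v hv)),
      main_lemma (iA := inst) haff t₂ σ xs val (fun v => (hatmost v).2)
        (fun v w hv hw => hinjS v w (hm2 v hv) (hm2 w hw))
        (fun v hv => hmem v (hm2 v hv))]
    have hfun : (fun g : Fin (S.card + 1) → A => t₁.realize (g ∘ σ))
        = fun g => t₂.realize (g ∘ σ) := funext fun g => hval (g ∘ σ)
    rw [hfun]
end

section
/- Let T be a monoidal (commutative) monad on Set. The following are equivalent: (1) T is affine, i.e. T PUnit is a subsingleton; (2) for all types A, B and all x : T A, y : T B, (fun a _ => a) <$> x <*> y = x and (fun _ b => b) <$> x <*> y = y (that is, χ ∘ ψ = id, where χ = ⟨Tπ₁, Tπ₂⟩). -/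
universe u

/-- `T` is affine (`T PUnit` is a subsingleton) iff χ ∘ ψ = id, i.e.
the two projections recover the components of ψ. -/
theorem affine_iff_chi_psi_eq_id
    (T : Type u → Type u) [Monad T] [LawfulMonad T] [CommApplicative T] :
    Subsingleton (T PUnit.{u+1}) ↔
      ∀ (A B : Type u) (x : T A) (y : T B),
        (fun a (_ : B) => a) <$> x <*> y = x ∧
        (fun (_ : A) b => b) <$> x <*> y = y := by
  constructor
  · intro h A B x y
    have key : ∀ (C D : Type u) (z : T C) (c : D), (fun _ => c) <$> z = pure c := by
      intro C D z c
      have h1 : ((fun _ => PUnit.unit) <$> z : T PUnit) = pure PUnit.unit :=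
        Subsingleton.elim _ _
      calc (fun _ => c) <$> z
          = (fun _ => c) <$> ((fun _ => PUnit.unit) <$> z) := by
            rw [← comp_map]; rfl
        _ = pure c := by rw [h1, map_pure]
    constructor
    · rw [seq_eq_bind, map_eq_bind_pure_comp, bind_assoc]
      simp only [Function.comp, pure_bind]
      calc (x >>= fun a => (fun _ => a) <$> y)
          = x >>= pure := by
            refine bind_congr fun a => ?_
            rw [key]
        _ = x := bind_pure x
    · rw [seq_eq_bind, map_eq_bind_pure_comp, bind_assoc]
      simp only [Function.comp, pure_bind, id_map']
      calc (x >>= fun _ => y)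
          = ((fun _ => PUnit.unit) <$> x) >>= fun _ => y := by
            rw [map_eq_bind_pure_comp, bind_assoc]
            simp [Function.comp]
        _ = y := by rw [key, pure_bind]
  · intro h
    constructor
    intro x y
    obtain ⟨h1, _⟩ := h PUnit PUnit x y
    obtain ⟨_, h2⟩ := h PUnit PUnit x y
    have : (fun (a : PUnit.{u+1}) (_ : PUnit.{u+1}) => a)
        = (fun (_ : PUnit.{u+1}) (b : PUnit.{u+1}) => b) := by
      funext a b; cases a; cases b; rfl
    rw [this] at h1
    rw [h1] at h2
    exact h2
end

section
/- Let T be a monoidal (commutative) monad on Set. The following are equivalent: (1) T is relevant, i.e. for every type A and every x : T A, Prod.mk <$> x <*> x = (fun a => (a, a)) <$> x (ψ ∘ Δ = TΔ); (2) for all types A, B and every t : T (A × B), Prod.mk <$> (Prod.fst <$> t) <*> (Prod.snd <$> t) = t (that is, ψ ∘ χ = id, where χ = ⟨Tπ₁, Tπ₂⟩). -/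
/-!
By naturality of `ψ`, `ψ ∘ χ = T(π₁ × π₂) ∘ ψ ∘ Δ`, which relevance turns into
`T((π₁ × π₂) ∘ Δ) = id`. Conversely `χ ∘ TΔ = Δ`, so `ψ ∘ χ = id` applied to `TΔ x`
gives `ψ (x, x) = TΔ x`.
-/

universe u

theorem prod_mk_map_seq_map {F : Type u → Type u} [Applicative F] [LawfulApplicative F]
    {X Y A B : Type u} (f : X → A) (g : Y → B) (x : F X) (y : F Y) :
    Prod.mk <$> (f <$> x) <*> (g <$> y) = Prod.map f g <$> (Prod.mk <$> x <*> y) := by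
  simp only [map_seq, seq_map_assoc, Functor.map_map]
  rfl

theorem relevant_iff_psi_chi_eq_id_general
    (T : Type u → Type u) [Monad T] [LawfulMonad T] :
    Relevant T ↔
      ∀ (A B : Type u) (t : T (A × B)),
        @Prod.mk A B <$> (Prod.fst <$> t) <*> (Prod.snd <$> t) = t := by
  constructor
  · intro hT A B t
    rw [prod_mk_map_seq_map, hT, Functor.map_map]
    exact id_map t
  · intro hT A x
    simpa only [Functor.map_map, Function.comp_def, id_map'] using hT A A ((fun a => (a, a)) <$> x)

/-- `T` is relevant iff ψ ∘ χ = id. -/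
theorem relevant_iff_psi_chi_eq_id
    (T : Type u → Type u) [Monad T] [LawfulMonad T] [CommApplicative T] :
    Relevant T ↔
      ∀ (A B : Type u) (t : T (A × B)),
        @Prod.mk A B <$> (Prod.fst <$> t) <*> (Prod.snd <$> t) = t :=
  relevant_iff_psi_chi_eq_id_general T
end
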